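/- arXiv:1507.00547 — 8 statements merged into one kernel-verified Lean document; each statement's English description precedes it below -/
import Mathlib

section
/- Let k ≥ 1 and n ≥ k + 2 be integers and let M be a set of size m = n^k. Then there exists a function f mapping each k-element subset X of M to a k!-element subset f(X) of M such that X ∩ f(X) = ∅ for every k-element subset X of M, and such that every subset P ⊆ M with |P| > k²n contains a k-element subset X ⊆ P with f(X) ∩ P ≠ ∅. -/
/-!
Identify `M` with the grid `[n]^k`. For a `k`-set `X` of points, call `z` a diagonal of `X` if,
for some ordering `x₁, …, x_k` of `X`, the `i`-th coordinate of `z` is that of `x_i`; there are at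
most `k!` diagonals, and `f X` is any `k!`-set outside `X` containing the diagonals not in `X`.
If `|P| > k² n`, some `z ∈ P` agrees in each coordinate `i` with more than `k` points of `P`:
the points failing this in coordinate `i` lie in at most `n` coordinate hyperplanes each meeting
`P` in at most `k` points, so there are at most `k² n` failing points in all. Hall's theorem then
gives distinct `x_i ∈ P \ {z}` with `x_i i = z i`, so `z ∈ f {x₁, …, x_k} ∩ P`.
-/

open Finset Function Fintype
open scoped Nat

section SetMapping

variable {α β : Type*}

/-- `f` is a set mapping of order `k` on `M` with values of size `m`, and every set free for `f`
has at most `r` elements. -/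
def IsSetMapping [DecidableEq α] (M : Finset α) (k m r : ℕ) (f : Finset α → Finset α) : Prop :=
  (∀ X, X ⊆ M → #X = k → f X ⊆ M ∧ #(f X) = m ∧ Disjoint X (f X)) ∧
    ∀ P, P ⊆ M → r < #P → ∃ X, X ⊆ P ∧ #X = k ∧ (f X ∩ P).Nonempty

theorem IsSetMapping.exists_map [DecidableEq α] [DecidableEq β] {M : Finset α} {k m r : ℕ}
    {f : Finset α → Finset α} (hf : IsSetMapping M k m r f) (ψ : α ↪ β) :
    ∃ g, IsSetMapping (M.map ψ) k m r g := by
  refine ⟨fun Y => (f (Y.preimage ψ ψ.injective.injOn)).map ψ, fun Y hY hYk => ?_,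
    fun Q hQ hrQ => ?_⟩
  · obtain ⟨X, hXM, rfl⟩ := subset_map_iff.1 hY
    rw [card_map] at hYk
    obtain ⟨hfM, hfm, hfX⟩ := hf.1 X hXM hYk
    simp only [preimage_map]
    exact ⟨map_subset_map.2 hfM, by rw [card_map, hfm], (disjoint_map ψ).2 hfX⟩
  · obtain ⟨P, hPM, rfl⟩ := subset_map_iff.1 hQ
    rw [card_map] at hrQ
    obtain ⟨X, hXP, hXk, hfXP⟩ := hf.2 P hPM hrQ
    refine ⟨X.map ψ, map_subset_map.2 hXP, by rw [card_map, hXk], ?_⟩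
    simpa only [preimage_map, ← map_inter, map_nonempty] using hfXP

theorem exists_isSetMapping_of_forced [DecidableEq α] {M : Finset α} {k m r : ℕ}
    (A : Finset α → Finset α) (hAM : ∀ X, A X ⊆ M) (hA : ∀ X ⊆ M, #X = k → #(A X) ≤ m)
    (hmk : m + k ≤ #M) (hP : ∀ P ⊆ M, r < #P → ∃ X ⊆ P, #X = k ∧ ((A X \ X) ∩ P).Nonempty) :
    ∃ f, IsSetMapping M k m r f := by
  have hpad : ∀ X, ∃ u, X ⊆ M → #X = k → A X \ X ⊆ u ∧ u ⊆ M \ X ∧ #u = m := by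
    intro X
    by_cases hX : X ⊆ M ∧ #X = k
    · obtain ⟨u, hAu, huM, hum⟩ := exists_subsuperset_card_eq
        (sdiff_subset_sdiff (hAM X) le_rfl) ((card_le_card sdiff_subset).trans (hA X hX.1 hX.2))
        (by rw [card_sdiff_of_subset hX.1, hX.2]; omega)
      exact ⟨u, fun _ _ => ⟨hAu, huM, hum⟩⟩
    · exact ⟨∅, fun hXM hXk => absurd ⟨hXM, hXk⟩ hX⟩
  choose f hf using hpad
  refine ⟨f, fun X hXM hXk => ?_, fun P hPM hrP => ?_⟩
  · obtain ⟨-, hfX, hfm⟩ := hf X hXM hXk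
    exact ⟨hfX.trans sdiff_subset, hfm, disjoint_of_subset_right hfX disjoint_sdiff⟩
  · obtain ⟨X, hXP, hXk, hAXP⟩ := hP P hPM hrP
    exact ⟨X, hXP, hXk, hAXP.mono (inter_subset_inter_right (hf X (hXP.trans hPM) hXk).1)⟩

end SetMapping

section Grid

variable {ι β : Type*} [Fintype ι] [DecidableEq β]

noncomputable def diagonals [DecidableEq ι] (X : Finset (ι → β)) : Finset (ι → β) :=
  univ.image fun g : ι ↪ X => fun i => (g i : ι → β) i

theorem card_diagonals_le [DecidableEq ι] (X : Finset (ι → β)) :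
    #(diagonals X) ≤ (#X).descFactorial (card ι) := by
  calc #(diagonals X) ≤ card (ι ↪ X) := card_image_le.trans_eq card_univ
    _ = (#X).descFactorial (card ι) := by rw [card_embedding_eq, card_coe]

theorem diagonal_mem_diagonals [DecidableEq ι] {X : Finset (ι → β)} {g : ι → ι → β}
    (hg : Injective g) (hgX : ∀ i, g i ∈ X) : (fun i => g i i) ∈ diagonals X :=
  mem_image.2 ⟨⟨fun i => ⟨g i, hgX i⟩, fun _ _ h => hg (congrArg Subtype.val h)⟩, mem_univ _, rfl⟩

theorem exists_mem_forall_lt_card_filter_apply_eq [Fintype β] {P : Finset (ι → β)} {r : ℕ}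
    (hP : card ι * (r * card β) < #P) : ∃ z ∈ P, ∀ i, r < #{x ∈ P | x i = z i} := by
  by_contra! hpoor
  set S : ι → Finset (ι → β) := fun i => {z ∈ P | #{x ∈ P | x i = z i} ≤ r}
  have hS : ∀ i, #(S i) ≤ r * card β := by
    intro i
    refine (card_le_mul_card_image (f := fun x => x i) (S i) r fun b hb => ?_).trans
      (Nat.mul_le_mul_left _ (card_le_univ _))
    obtain ⟨y, hy, rfl⟩ := mem_image.1 hb
    exact (card_le_card (filter_subset_filter _ (filter_subset _ P))).trans (mem_filter.1 hy).2
  have hPS : P ⊆ univ.biUnion S := fun z hz => by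
    obtain ⟨i, hi⟩ := hpoor z hz
    exact mem_biUnion.2 ⟨i, mem_univ _, mem_filter.2 ⟨hz, hi⟩⟩
  have hcard := (card_le_card hPS).trans (card_biUnion_le.trans (sum_le_sum fun i _ => hS i))
  rw [sum_const, card_univ, smul_eq_mul] at hcard
  omega

theorem exists_subset_erase_mem_diagonals [DecidableEq ι] {P : Finset (ι → β)} {z : ι → β}
    (hz : ∀ i, card ι < #{x ∈ P | x i = z i}) :
    ∃ X ⊆ P.erase z, #X = card ι ∧ z ∈ diagonals X := by
  set t : ι → Finset (ι → β) := fun i => {x ∈ P.erase z | x i = z i}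
  have ht : ∀ i, card ι ≤ #(t i) := fun i => by
    have := pred_card_le_card_erase (a := z) (s := {x ∈ P | x i = z i})
    have := hz i
    simp only [t, filter_erase]
    omega
  have hall : ∀ s : Finset ι, #s ≤ #(s.biUnion t) := by
    intro s
    obtain rfl | ⟨i, hi⟩ := s.eq_empty_or_nonempty
    · simp
    · exact (card_le_univ s).trans ((ht i).trans (card_le_card (subset_biUnion_of_mem t hi)))
  obtain ⟨g, hg, hgt⟩ := (all_card_le_biUnion_card_iff_exists_injective t).1 hall
  simp only [t, mem_filter] at hgt
  refine ⟨univ.image g, image_subset_iff.2 fun i _ => (hgt i).1, ?_, ?_⟩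
  · rw [card_image_of_injective _ hg, card_univ]
  · convert diagonal_mem_diagonals hg fun i => mem_image_of_mem g (mem_univ i) using 1
    exact funext fun i => ((hgt i).2).symm

theorem exists_isSetMapping_pi [DecidableEq ι] [Fintype β] {m : ℕ} (hm : (card ι)! ≤ m)
    (hmι : m + card ι ≤ card β ^ card ι) :
    ∃ f, IsSetMapping (univ : Finset (ι → β)) (card ι) m (card ι ^ 2 * card β) f := by
  refine exists_isSetMapping_of_forced diagonals (fun _ => subset_univ _) (fun X _ hX => ?_)
    (by simpa using hmι) fun P _ hP => ?_
  · calc #(diagonals X) ≤ (#X).descFactorial (card ι) := card_diagonals_le X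
      _ = (card ι)! := by rw [hX, Nat.descFactorial_self]
      _ ≤ m := hm
  · obtain ⟨z, hzP, hz⟩ := exists_mem_forall_lt_card_filter_apply_eq (r := card ι)
      (by rwa [← mul_assoc, ← sq])
    obtain ⟨X, hXz, hX, hzX⟩ := exists_subset_erase_mem_diagonals hz
    exact ⟨X, hXz.trans (erase_subset _ _), hX, z,
      mem_inter.2 ⟨mem_sdiff.2 ⟨hzX, fun h => notMem_erase z P (hXz h)⟩, hzP⟩⟩

end Grid

theorem Nat.factorial_add_le_pow {k n : ℕ} (h : k < n) : k ! + k ≤ n ^ k :=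
  calc k ! + k ≤ (k + 1)! := by rw [Nat.factorial_succ]; nlinarith [Nat.factorial_pos k]
    _ = (k + 1).descFactorial k := by
      simpa using (Nat.factorial_mul_descFactorial k.le_succ).symm
    _ ≤ (k + 1) ^ k := Nat.descFactorial_le_pow _ _
    _ ≤ n ^ k := Nat.pow_le_pow_left h _

theorem stmt0_general {α : Type*} [DecidableEq α] (k n : ℕ) (hn : k + 2 ≤ n)
    (M : Finset α) (hM : M.card = n ^ k) :
    ∃ f : Finset α → Finset α,
      (∀ X : Finset α, X ⊆ M → X.card = k →
        f X ⊆ M ∧ (f X).card = Nat.factorial k ∧ Disjoint X (f X)) ∧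
      (∀ P : Finset α, P ⊆ M → k ^ 2 * n < P.card →
        ∃ X : Finset α, X ⊆ P ∧ X.card = k ∧ (f X ∩ P).Nonempty) := by
  obtain ⟨f, hf⟩ := exists_isSetMapping_pi (ι := Fin k) (β := Fin n) (m := k !)
    (by rw [Fintype.card_fin]) (by simpa using Nat.factorial_add_le_pow (show k < n by omega))
  rw [Fintype.card_fin, Fintype.card_fin] at hf
  obtain ⟨e⟩ : Nonempty ((Fin k → Fin n) ≃ M) := ⟨Fintype.equivOfCardEq (by simp [hM])⟩
  obtain ⟨g, hg⟩ := hf.exists_map (e.toEmbedding.trans (.subtype _))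
  rw [← map_map, map_univ_equiv, univ_eq_attach, attach_map_val] at hg
  exact ⟨g, hg⟩

/-- **Erdős–Hajnal set mapping construction.**
Let `k ≥ 1` and `n ≥ k + 2` and let `M` be a set of size `m = n ^ k`. Then there is a
function `f` mapping each `k`-element subset `X` of `M` to a `k!`-element subset `f X` of
`M` with `X ∩ f X = ∅`, such that every `P ⊆ M` with `|P| > k² n` contains a `k`-element
subset `X ⊆ P` with `f X ∩ P ≠ ∅`. -/
theorem stmt0 {α : Type*} [DecidableEq α] (k n : ℕ) (hk : 1 ≤ k) (hn : k + 2 ≤ n)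
    (M : Finset α) (hM : M.card = n ^ k) :
    ∃ f : Finset α → Finset α,
      (∀ X : Finset α, X ⊆ M → X.card = k →
        f X ⊆ M ∧ (f X).card = Nat.factorial k ∧ Disjoint X (f X)) ∧
      (∀ P : Finset α, P ⊆ M → k ^ 2 * n < P.card →
        ∃ X : Finset α, X ⊆ P ∧ X.card = k ∧ (f X ∩ P).Nonempty) :=
  stmt0_general k n hn M hM
end

section
/- For every integer m ≥ 2 there exists a function f mapping each 2-element subset X of the grid [m] × [m] to a 2-element subset f(X) of [m] × [m] with f(X) ≠ X and |X ∩ f(X)| ≤ 1 for every X, such that every subset Q ⊆ [m] × [m] with |Q| ≥ 2m + 1 contains a 2-element subset X ⊆ Q with f(X) ⊆ Q. -/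
noncomputable def caroSwap (m : ℕ) (hm : 2 ≤ m) (z : Fin m) : Fin m :=
  if z = ⟨0, by omega⟩ then ⟨1, by omega⟩ else ⟨0, by omega⟩

lemma caroSwap_ne (m : ℕ) (hm : 2 ≤ m) (z : Fin m) : caroSwap m hm z ≠ z := by
  unfold caroSwap
  split_ifs with h
  · rw [h]; intro hc; simpa using congrArg Fin.val hc
  · intro hc; exact h hc.symm

noncomputable def caroF (m : ℕ) (hm : 2 ≤ m) :
    Finset (Fin m × Fin m) → Finset (Fin m × Fin m) := fun X =>
  if h : ∃ p : (Fin m × Fin m) × (Fin m × Fin m),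
      X = {p.1, p.2} ∧ p.1.1 < p.2.1 ∧ p.1.2 ≠ p.2.2 then
    {h.choose.1, (h.choose.1.1, h.choose.2.2)}
  else if h2 : ∃ x, x ∈ X then
    {h2.choose, (caroSwap m hm h2.choose.1, caroSwap m hm h2.choose.2)}
  else ∅

lemma caro_pigeon (m : ℕ) (Q : Finset (Fin m × Fin m)) (hQ : 2 * m + 1 ≤ Q.card) :
    ∃ a c b d : Fin m, a < c ∧ b ≠ d ∧ (a, b) ∈ Q ∧ (a, d) ∈ Q ∧ (c, d) ∈ Q := by
  classical
  by_contra hcon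
  push_neg at hcon
  set S : Fin m → Finset (Fin m) := fun a => (Q.filter fun p => p.1 = a).image Prod.snd with hS
  have hmem : ∀ a b, b ∈ S a ↔ (a, b) ∈ Q := by
    intro a b
    simp only [hS, Finset.mem_image, Finset.mem_filter]
    constructor
    · rintro ⟨p, ⟨hp, h1⟩, h2⟩
      have : p = (a, b) := Prod.ext h1 h2
      rwa [this] at hp
    · intro h; exact ⟨(a, b), ⟨h, rfl⟩, rfl⟩
  have hcards : ∀ a, (Q.filter fun p => p.1 = a).card = (S a).card := by
    intro a
    exact (Finset.card_image_of_injOn (fun p hp q hq hpq => by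
      simp only [Finset.coe_filter, Set.mem_setOf_eq] at hp hq
      exact Prod.ext (hp.2.trans hq.2.symm) hpq)).symm
  have hsum : Q.card = ∑ a : Fin m, (S a).card := by
    rw [Finset.card_eq_sum_card_fiberwise (f := Prod.fst) (t := Finset.univ)
      (fun x _ => Finset.mem_univ _)]
    exact Finset.sum_congr rfl fun a _ => hcards a
  have hdisj : ∀ a a' : Fin m, a < a' → 2 ≤ (S a).card → Disjoint (S a) (S a') := by
    intro a a' hlt h2
    rw [Finset.disjoint_left]
    intro d hd hd'
    have h2' : 1 < (S a).card := h2
    obtain ⟨b, hb, hbd⟩ := Finset.exists_mem_ne h2' d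
    exact hcon a a' b d hlt hbd ((hmem a b).mp hb) ((hmem a d).mp hd) ((hmem a' d).mp hd')
  have h1 : ∑ a ∈ Finset.univ.filter (fun a => 2 ≤ (S a).card), (S a).card ≤ m := by
    rw [← Finset.card_biUnion]
    · calc ((Finset.univ.filter (fun a => 2 ≤ (S a).card)).biUnion S).card
          ≤ (Finset.univ : Finset (Fin m)).card := Finset.card_le_univ _
        _ = m := by simp
    · intro x hx y hy hxy
      rcases lt_or_gt_of_ne hxy with h | h
      · exact hdisj x y h (Finset.mem_filter.mp hx).2
      · exact (hdisj y x h (Finset.mem_filter.mp hy).2).symm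
  have h2 : ∑ a ∈ Finset.univ.filter (fun a => ¬ 2 ≤ (S a).card), (S a).card ≤ m := by
    calc ∑ a ∈ Finset.univ.filter (fun a => ¬ 2 ≤ (S a).card), (S a).card
        ≤ ∑ a ∈ Finset.univ.filter (fun a => ¬ 2 ≤ (S a).card), 1 :=
          Finset.sum_le_sum (fun a ha => by
            have := (Finset.mem_filter.mp ha).2; omega)
      _ = (Finset.univ.filter (fun a => ¬ 2 ≤ (S a).card)).card := by simp
      _ ≤ (Finset.univ : Finset (Fin m)).card := Finset.card_le_univ _
      _ = m := by simp
  have hsplit := Finset.sum_filter_add_sum_filter_not Finset.univ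
    (fun a => 2 ≤ (S a).card) (fun a => (S a).card)
  omega

/-- **Caro's problem, `q(m², 2, 1) ≤ 2m`.**
For every `m ≥ 2` there is a function `f` mapping each `2`-element subset `X` of the grid
`[m] × [m]` to a `2`-element subset `f X` of the grid with `f X ≠ X` and `|X ∩ f X| ≤ 1`,
such that every `Q` with `|Q| ≥ 2m + 1` contains a `2`-element subset `X ⊆ Q` with
`f X ⊆ Q`. -/
theorem stmt1 (m : ℕ) (hm : 2 ≤ m) :
    ∃ f : Finset (Fin m × Fin m) → Finset (Fin m × Fin m),
      (∀ X : Finset (Fin m × Fin m), X.card = 2 →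
        (f X).card = 2 ∧ f X ≠ X ∧ (X ∩ f X).card ≤ 1) ∧
      (∀ Q : Finset (Fin m × Fin m), 2 * m + 1 ≤ Q.card →
        ∃ X : Finset (Fin m × Fin m), X ⊆ Q ∧ X.card = 2 ∧ f X ⊆ Q) := by
  classical
  refine ⟨caroF m hm, ?_, ?_⟩
  · intro X hX
    unfold caroF
    split_ifs with h h2
    · obtain ⟨hXeq, hlt, hne⟩ := h.choose_spec
      set u := h.choose.1 with hu
      set v := h.choose.2 with hv
      set q : Fin m × Fin m := (u.1, v.2) with hqdef
      have hqu : q ≠ u := by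
        intro hc; exact hne (congrArg Prod.snd hc).symm
      have hqv : q ≠ v := by
        intro hc
        have hfst : q.1 = v.1 := congrArg Prod.fst hc
        exact (ne_of_lt hlt) hfst
      have hqX : q ∉ X := by
        rw [hXeq]
        intro hmem'
        rcases Finset.mem_insert.mp hmem' with h' | h'
        · exact hqu h'
        · exact hqv (Finset.mem_singleton.mp h')
      refine ⟨Finset.card_pair (Ne.symm hqu), ?_, ?_⟩
      · intro hEq
        apply hqX
        rw [← hEq]
        exact Finset.mem_insert_of_mem (Finset.mem_singleton_self _)
      · have hsub : X ∩ {u, q} ⊆ {u} := by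
          intro z hz
          rw [Finset.mem_inter] at hz
          rcases Finset.mem_insert.mp hz.2 with h' | h'
          · rw [Finset.mem_singleton]; exact h'
          · exact absurd ((Finset.mem_singleton.mp h') ▸ hz.1) hqX
        calc (X ∩ {u, q}).card ≤ ({u} : Finset (Fin m × Fin m)).card :=
              Finset.card_le_card hsub
          _ = 1 := Finset.card_singleton _
    · set x := h2.choose with hxdef
      have hx : x ∈ X := h2.choose_spec
      set y : Fin m × Fin m := (caroSwap m hm x.1, caroSwap m hm x.2) with hydef
      have hy1 : y.1 ≠ x.1 := caroSwap_ne m hm x.1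
      have hy2 : y.2 ≠ x.2 := caroSwap_ne m hm x.2
      have hxy : x ≠ y := fun hEq => hy1 (congrArg Prod.fst hEq).symm
      have hyX : y ∉ X := by
        intro hyX
        have hsub : ({x, y} : Finset (Fin m × Fin m)) ⊆ X := by
          intro z hz
          rcases Finset.mem_insert.mp hz with h' | h'
          · rw [h']; exact hx
          · rw [Finset.mem_singleton.mp h']; exact hyX
        have hc2 : ({x, y} : Finset (Fin m × Fin m)).card = 2 := Finset.card_pair hxy
        have hXeq : ({x, y} : Finset (Fin m × Fin m)) = X :=
          Finset.eq_of_subset_of_card_le hsub (by rw [hX, hc2])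
        rcases lt_trichotomy x.1 y.1 with hl | he | hg
        · exact h ⟨(x, y), hXeq.symm, hl, fun hc => hy2 hc.symm⟩
        · exact hy1 he.symm
        · exact h ⟨(y, x), by rw [← hXeq]; exact Finset.pair_comm x y, hg, hy2⟩
      refine ⟨Finset.card_pair (fun hc => hyX (hc ▸ hx)), ?_, ?_⟩
      · intro hEq
        apply hyX
        rw [← hEq]
        exact Finset.mem_insert_of_mem (Finset.mem_singleton_self _)
      · have hsub : X ∩ {x, y} ⊆ {x} := by
          intro z hz
          rw [Finset.mem_inter] at hz
          rcases Finset.mem_insert.mp hz.2 with h' | h'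
          · rw [Finset.mem_singleton]; exact h'
          · exact absurd ((Finset.mem_singleton.mp h') ▸ hz.1) hyX
        calc (X ∩ {x, y}).card ≤ ({x} : Finset (Fin m × Fin m)).card :=
              Finset.card_le_card hsub
          _ = 1 := Finset.card_singleton _
    · have hne : X.Nonempty := Finset.card_pos.mp (by omega)
      exact absurd ⟨hne.choose, hne.choose_spec⟩ h2
  · intro Q hQ
    obtain ⟨a, c, b, d, hac, hbd, hab, had, hcd⟩ := caro_pigeon m Q hQ
    have hXcard : ({(a, b), (c, d)} : Finset (Fin m × Fin m)).card = 2 :=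
      Finset.card_pair (by
        intro hEq
        exact (ne_of_lt hac) (congrArg Prod.fst hEq))
    refine ⟨{(a, b), (c, d)}, ?_, hXcard, ?_⟩
    · exact Finset.insert_subset hab (Finset.singleton_subset_iff.mpr hcd)
    · have hw : ∃ p : (Fin m × Fin m) × (Fin m × Fin m),
          ({(a, b), (c, d)} : Finset (Fin m × Fin m)) = {p.1, p.2} ∧
          p.1.1 < p.2.1 ∧ p.1.2 ≠ p.2.2 := ⟨((a, b), (c, d)), rfl, hac, hbd⟩
      unfold caroF
      rw [dif_pos hw]
      obtain ⟨hXeq, hlt, hne⟩ := hw.choose_spec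
      set p := hw.choose with hp
      have hu : p.1 = (a, b) ∨ p.1 = (c, d) := by
        have : p.1 ∈ ({(a, b), (c, d)} : Finset (Fin m × Fin m)) := by
          rw [hXeq]; exact Finset.mem_insert_self _ _
        simpa using this
      have hv : p.2 = (a, b) ∨ p.2 = (c, d) := by
        have : p.2 ∈ ({(a, b), (c, d)} : Finset (Fin m × Fin m)) := by
          rw [hXeq]; exact Finset.mem_insert_of_mem (Finset.mem_singleton_self _)
        simpa using this
      rcases hu with h1 | h1 <;> rcases hv with h2 | h2
      · rw [h1, h2] at hlt; exact absurd hlt (lt_irrefl _)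
      · rw [h1, h2]
        exact Finset.insert_subset hab (Finset.singleton_subset_iff.mpr had)
      · rw [h1, h2] at hlt; exact absurd (hac.trans hlt) (lt_irrefl _)
      · rw [h1, h2] at hlt; exact absurd hlt (lt_irrefl _)
end

section
/- For every integer m ≥ 2 there exists a function f mapping each 2-element subset X of the grid [m] × [m] × [m] to a 2-element subset f(X) of [m] × [m] × [m] with X ∩ f(X) = ∅ for every X, such that every subset Q ⊆ [m] × [m] × [m] with |Q| ≥ 3m² + 1 contains a 2-element subset X ⊆ Q with f(X) ⊆ Q. -/
open Finset

private lemma caro_le_one_add_choose (d : ℕ) : d ≤ 1 + d.choose 2 := by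
  match d with
  | 0 => simp
  | 1 => simp
  | (n+2) =>
    have h : n + 1 ≤ (n+2).choose 2 := by
      rw [Nat.choose_two_right]
      rw [Nat.le_div_iff_mul_le (by norm_num)]
      rw [Nat.succ_sub_one]
      nlinarith
    omega

private lemma caro_exists_rect (m : ℕ) (Q : Finset (Fin m × Fin m × Fin m))
    (hQ : 3 * m ^ 2 + 1 ≤ Q.card) :
    ∃ a ∈ Q, ∃ b ∈ Q, a.1 ≠ b.1 ∧ a.2 ≠ b.2 ∧ (a.1, b.2) ∈ Q ∧ (b.1, a.2) ∈ Q := by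
  classical
  by_contra hc
  push_neg at hc
  set fib : Fin m × Fin m → Finset (Fin m × Fin m × Fin m) := fun r => Q.filter (fun p => p.2 = r) with hfib
  set S : Fin m × Fin m → Finset (Fin m) := fun r => (fib r).image Prod.fst with hSdef
  set P : Fin m × Fin m → Finset (Finset (Fin m)) := fun r => (S r).powersetCard 2 with hPdef
  have hmemS : ∀ (r : Fin m × Fin m) (c : Fin m), c ∈ S r → (c, r) ∈ Q := by
    intro r c hcS
    simp only [hSdef, hfib, mem_image, mem_filter] at hcS
    obtain ⟨p, ⟨hpQ, hp2⟩, hp1⟩ := hcS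
    have : p = (c, r) := by
      ext <;> simp [hp1, hp2]
    rwa [this] at hpQ
  have hcard : Q.card = ∑ r : Fin m × Fin m, (fib r).card :=
    Finset.card_eq_sum_card_fiberwise (f := Prod.snd) (fun x _ => mem_univ _)
  have hS : ∀ r : Fin m × Fin m, (S r).card = (fib r).card := by
    intro r
    apply Finset.card_image_of_injOn
    intro p hp q hq hpq
    simp only [hfib, Finset.coe_filter, Set.mem_setOf_eq] at hp hq
    exact Prod.ext_iff.mpr ⟨hpq, hp.2.trans hq.2.symm⟩
  have hdisj : ∀ r ∈ (univ : Finset (Fin m × Fin m)), ∀ r' ∈ (univ : Finset (Fin m × Fin m)), r ≠ r' →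
      Disjoint (P r) (P r') := by
    intro r _ r' _ hrr'
    rw [Finset.disjoint_left]
    intro s hsr hsr'
    simp only [hPdef, mem_powersetCard] at hsr hsr'
    obtain ⟨c, c', hcc', hs⟩ := Finset.card_eq_two.mp hsr.2
    have hc_r : c ∈ S r := hsr.1 (by simp [hs])
    have hc'_r : c' ∈ S r := hsr.1 (by simp [hs])
    have hc_r' : c ∈ S r' := hsr'.1 (by simp [hs])
    have hc'_r' : c' ∈ S r' := hsr'.1 (by simp [hs])
    exact hc (c, r) (hmemS r c hc_r) (c', r') (hmemS r' c' hc'_r') hcc' hrr'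
      (hmemS r' c hc_r') (hmemS r c' hc'_r)
  have hsum : ∑ r : Fin m × Fin m, (P r).card ≤ m.choose 2 := by
    rw [← Finset.card_biUnion hdisj]
    calc ((univ : Finset (Fin m × Fin m)).biUnion P).card
        ≤ ((univ : Finset (Fin m)).powersetCard 2).card := by
          apply Finset.card_le_card
          intro s hs
          simp only [mem_biUnion] at hs
          obtain ⟨r, _, hsr⟩ := hs
          exact Finset.powersetCard_mono (subset_univ _) hsr
      _ = m.choose 2 := by rw [Finset.card_powersetCard, card_univ, Fintype.card_fin]
  have hPcard : ∀ r : Fin m × Fin m, (P r).card = ((S r).card).choose 2 := by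
    intro r; rw [hPdef]; exact Finset.card_powersetCard 2 (S r)
  have hbound : Q.card ≤ m ^ 2 + m.choose 2 := by
    rw [hcard]
    calc ∑ r : Fin m × Fin m, (fib r).card = ∑ r : Fin m × Fin m, (S r).card := by
          apply Finset.sum_congr rfl; intro r _; rw [hS]
      _ ≤ ∑ r : Fin m × Fin m, (1 + ((S r).card).choose 2) := by
          apply Finset.sum_le_sum; intro r _; exact caro_le_one_add_choose _
      _ = (Fintype.card (Fin m × Fin m)) * 1 + ∑ r : Fin m × Fin m, ((S r).card).choose 2 := by
          rw [Finset.sum_add_distrib, Finset.sum_const, card_univ, smul_eq_mul]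
      _ ≤ m ^ 2 + m.choose 2 := by
          have : Fintype.card (Fin m × Fin m) = m ^ 2 := by
            simp [Fintype.card_prod, sq]
          rw [this, mul_one]
          gcongr
          calc ∑ r : Fin m × Fin m, ((S r).card).choose 2 = ∑ r : Fin m × Fin m, (P r).card := by
                apply Finset.sum_congr rfl; intro r _; rw [hPcard]
            _ ≤ m.choose 2 := hsum
  have hch : m.choose 2 ≤ m ^ 2 := by
    calc m.choose 2 ≤ m * (m-1) := by rw [Nat.choose_two_right]; exact Nat.div_le_self _ _
      _ ≤ m * m := by exact Nat.mul_le_mul_left m (Nat.sub_le m 1)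
      _ = m ^ 2 := (sq m).symm
  omega

/-- **Caro's problem, `q(m³, 2, 0) ≤ 3m²`.**
For every `m ≥ 2` there is a function `f` mapping each `2`-element subset `X` of the grid
`[m] × [m] × [m]` to a `2`-element subset `f X` of the grid with `X ∩ f X = ∅`,
such that every `Q` with `|Q| ≥ 3m² + 1` contains a `2`-element subset `X ⊆ Q` with
`f X ⊆ Q`. -/
theorem stmt2 (m : ℕ) (hm : 2 ≤ m) :
    ∃ f : Finset (Fin m × Fin m × Fin m) → Finset (Fin m × Fin m × Fin m),
      (∀ X : Finset (Fin m × Fin m × Fin m), X.card = 2 →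
        (f X).card = 2 ∧ Disjoint X (f X)) ∧
      (∀ Q : Finset (Fin m × Fin m × Fin m), 3 * m ^ 2 + 1 ≤ Q.card →
        ∃ X : Finset (Fin m × Fin m × Fin m), X ⊆ Q ∧ X.card = 2 ∧ f X ⊆ Q) := by
  classical
  set α := Fin m × Fin m × Fin m with hα
  -- the function
  set f : Finset α → Finset α := fun X =>
    if h : ∃ p : α × α, p.1.1 ≠ p.2.1 ∧ p.1.2 ≠ p.2.2 ∧ X = {p.1, p.2} then
      {(h.choose.1.1, h.choose.2.2), (h.choose.2.1, h.choose.1.2)}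
    else if h2 : 2 ≤ ((univ : Finset α) \ X).card then
      (Finset.exists_subset_card_eq h2).choose
    else ∅ with hfdef
  -- value of f on diagonal pairs
  have hfval : ∀ a b : α, a.1 ≠ b.1 → a.2 ≠ b.2 →
      f {a, b} = {(a.1, b.2), (b.1, a.2)} := by
    intro a b h1 h2
    have hex : ∃ p : α × α, p.1.1 ≠ p.2.1 ∧ p.1.2 ≠ p.2.2 ∧ ({a, b} : Finset α) = {p.1, p.2} :=
      ⟨(a, b), h1, h2, rfl⟩
    rw [hfdef]
    simp only [dif_pos hex]
    obtain ⟨q1, q2, qX⟩ := hex.choose_spec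
    set p := hex.choose
    have hab : a ≠ b := fun h => h1 (congrArg Prod.fst h)
    have hp12 : p.1 ≠ p.2 := fun h => q1 (congrArg Prod.fst h)
    have hmem1 : p.1 ∈ ({a, b} : Finset α) := by rw [qX]; simp
    have hmem2 : p.2 ∈ ({a, b} : Finset α) := by rw [qX]; simp
    have hmema : a ∈ ({p.1, p.2} : Finset α) := by rw [← qX]; simp
    simp only [mem_insert, mem_singleton] at hmem1 hmem2 hmema
    rcases hmem1 with h1a | h1b
    · have h2b : p.2 = b := by
        rcases hmem2 with h | h
        · exact absurd (h1a ▸ h ▸ rfl : p.1 = p.2) hp12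
        · exact h
      rw [h1a, h2b]
    · have h2a : p.2 = a := by
        rcases hmem2 with h | h
        · exact h
        · exact absurd (h1b ▸ h ▸ rfl : p.1 = p.2) hp12
      rw [h1b, h2a, Finset.pair_comm]
  refine ⟨f, ?_, ?_⟩
  · -- first property
    intro X hX2
    simp only [hfdef]
    split_ifs with h h2
    · obtain ⟨q1, q2, qX⟩ := h.choose_spec
      set p := h.choose
      constructor
      · rw [Finset.card_insert_of_notMem, Finset.card_singleton]
        simp only [mem_singleton]
        intro hcontra
        have h2' := congrArg Prod.fst hcontra
        exact q1 h2'
      · rw [Finset.disjoint_right]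
        intro x hx hxX
        rw [qX] at hxX
        simp only [mem_insert, mem_singleton] at hx hxX
        rcases hx with rfl | rfl <;> rcases hxX with h' | h'
        · have h2' := congrArg Prod.snd h'
          exact q2 h2'.symm
        · have h2' := congrArg Prod.fst h'
          exact q1 h2'
        · have h2' := congrArg Prod.fst h'
          exact q1 h2'.symm
        · have h2' := congrArg Prod.snd h'
          exact q2 h2'
    · obtain ⟨hsub, hcard⟩ := (Finset.exists_subset_card_eq h2).choose_spec
      refine ⟨hcard, ?_⟩
      rw [Finset.disjoint_right]
      intro x hx hxX
      have := hsub hx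
      rw [Finset.mem_sdiff] at this
      exact this.2 hxX
    · exfalso
      apply h2
      have hcu : ((univ : Finset α) \ X).card = m * (m * m) - 2 := by
        rw [Finset.card_sdiff_of_subset (subset_univ _), card_univ, hX2]
        simp [hα, Fintype.card_prod]
      have : 8 ≤ m * (m * m) := by nlinarith
      omega
  · -- second property
    intro Q hQ
    obtain ⟨a, haQ, b, hbQ, hab1, hab2, hc1, hc2⟩ := caro_exists_rect m Q hQ
    refine ⟨{a, b}, ?_, ?_, ?_⟩
    · intro x hx
      simp only [mem_insert, mem_singleton] at hx
      rcases hx with rfl | rfl <;> assumption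
    · rw [Finset.card_insert_of_notMem (by simp only [mem_singleton]; exact fun h => hab1 (congrArg Prod.fst h)), Finset.card_singleton]
    · rw [hfval a b hab1 hab2]
      intro x hx
      simp only [mem_insert, mem_singleton] at hx
      rcases hx with rfl | rfl <;> assumption
end

section
/- Let 2 ≤ r ≤ s and N ≥ 1 be integers, and let G be the complete bipartite graph with parts U and V where |U| = N and |V| = N^r, so that G has m = N^{r+1} edges. Then every subgraph of G which is K_{r,s}-free has at most s·N^r = s·m^{r/(r+1)} edges. -/
open Finset

private lemma descFactorial_pos' {k n : ℕ} (h : k ≤ n) : 1 ≤ n.descFactorial k := by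
  calc 1 ≤ (n + 1 - k) ^ k := Nat.one_le_pow _ _ (by omega)
    _ ≤ n.descFactorial k := Nat.pow_sub_le_descFactorial n k

/-- tangent-type lower bound for descFactorial -/
private lemma desc_lb (k s : ℕ) (hks : k + 1 ≤ s) :
    ∀ d : ℕ, s.descFactorial k * (d - (s - 1)) ≤ d.descFactorial (k + 1) := by
  have hstep : s.descFactorial k ≤ (k + 1) * (s - 1).descFactorial k := by
    cases k with
    | zero => simp
    | succ j =>
      obtain ⟨s', rfl⟩ : ∃ s', s = s' + 1 := ⟨s - 1, by omega⟩
      rw [Nat.succ_descFactorial_succ, Nat.add_sub_cancel, Nat.descFactorial_succ]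
      have h1 : s' + 1 ≤ (j + 2) * (s' - j) := by
        have hj : j + 1 ≤ s' := by omega
        obtain ⟨a, ha⟩ : ∃ a, s' = j + 1 + a := ⟨s' - (j + 1), by omega⟩
        have : a ≤ (j + 2) * a := Nat.le_mul_of_pos_left a (by omega)
        calc s' + 1 = (j + 2) + a := by omega
          _ ≤ (j + 2) + (j + 2) * a := by omega
          _ = (j + 2) * (1 + a) := by ring
          _ = (j + 2) * (s' - j) := by congr 1; omega
      calc (s' + 1) * s'.descFactorial j ≤ ((j + 2) * (s' - j)) * s'.descFactorial j :=
            Nat.mul_le_mul_right _ h1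
        _ = (j + 2) * ((s' - j) * s'.descFactorial j) := by ring
  intro d
  induction d with
  | zero => simp [Nat.zero_descFactorial_succ]
  | succ d ih =>
    by_cases hd : d + 1 ≤ s - 1
    · simp [Nat.sub_eq_zero_of_le hd]
    · have hd' : s - 1 ≤ d := by omega
      have h2 : d + 1 - (s - 1) = (d - (s - 1)) + 1 := by omega
      rw [h2, Nat.mul_add, Nat.mul_one, Nat.succ_descFactorial_succ]
      have h3 : s.descFactorial k ≤ (k + 1) * d.descFactorial k :=
        le_trans hstep (Nat.mul_le_mul_left _ (Nat.descFactorial_le _ (by omega)))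
      have h4 : d.descFactorial (k + 1) = (d - k) * d.descFactorial k := Nat.descFactorial_succ d k
      have h5 : (d + 1) * d.descFactorial k = (d - k) * d.descFactorial k
          + (k + 1) * d.descFactorial k := by
        rw [← Nat.add_mul]; congr 1; omega
      rw [h5, ← h4]
      exact Nat.add_le_add ih h3

/-- **Tightness for `K_{r,s}`-free subgraphs of complete bipartite graphs.**
Let `2 ≤ r ≤ s` and `N ≥ 1`, and let `G` be the complete bipartite graph with parts of
sizes `N` and `N^r` (so `G` has `m = N^{r+1}` edges). Then every `K_{r,s}`-free subgraph
of `G` has at most `s · N^r = s · m^{r/(r+1)}` edges. -/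
theorem stmt5 (r s N : ℕ) (hr : 2 ≤ r) (hrs : r ≤ s) (hN : 1 ≤ N)
    (H : SimpleGraph (Fin N ⊕ Fin (N ^ r)))
    (hsub : H ≤ completeBipartiteGraph (Fin N) (Fin (N ^ r)))
    (hfree : ¬ ∃ (A B : Finset (Fin N ⊕ Fin (N ^ r))),
      A.card = r ∧ B.card = s ∧ Disjoint A B ∧ ∀ a ∈ A, ∀ b ∈ B, H.Adj a b) :
    H.edgeSet.ncard ≤ s * N ^ r := by
  classical
  set D : Fin (N ^ r) → Finset (Fin N) :=
    fun v => univ.filter fun u => H.Adj (Sum.inl u) (Sum.inr v) with hD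
  set d : Fin (N ^ r) → ℕ := fun v => (D v).card with hd
  -- Step 1 : edge count equals sum of degrees on the right side
  have hP : H.edgeSet.ncard = ∑ v, d v := by
    have h1 : H.edgeSet.ncard = H.edgeFinset.card := by
      rw [← SimpleGraph.coe_edgeFinset, Set.ncard_coe_finset]
    set P : Finset (Fin N × Fin (N ^ r)) :=
      univ.filter fun p => H.Adj (Sum.inl p.1) (Sum.inr p.2) with hPdef
    have h2 : H.edgeFinset.card = P.card := by
      refine (Finset.card_bij (fun p _ => s(Sum.inl p.1, Sum.inr p.2)) ?_ ?_ ?_).symm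
      · intro p hp
        simp only [hPdef, mem_filter, mem_univ, true_and] at hp
        rw [SimpleGraph.mem_edgeFinset, SimpleGraph.mem_edgeSet]
        exact hp
      · intro p hp q hq h
        rw [Sym2.eq_iff] at h
        rcases h with ⟨ha, hb⟩ | ⟨ha, hb⟩
        · exact Prod.ext (Sum.inl.inj ha) (Sum.inr.inj hb)
        · exact absurd ha (by simp)
      · intro e he
        induction e using Sym2.ind with
        | _ a b =>
          rw [SimpleGraph.mem_edgeFinset, SimpleGraph.mem_edgeSet] at he
          have hcb := hsub he
          rcases a with u | v <;> rcases b with u' | v'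
          · simp at hcb
          · exact ⟨(u, v'), by simp [hPdef, he], rfl⟩
          · exact ⟨(u', v), by simp [hPdef, he.symm], Sym2.eq_swap⟩
          · simp at hcb
    have h3 : P.card = ∑ v, d v := by
      rw [Finset.card_eq_sum_card_fiberwise
        (f := Prod.snd) (t := univ) (fun p _ => mem_univ _)]
      refine Finset.sum_congr rfl fun v _ => ?_
      refine Finset.card_bij (fun p _ => p.1) ?_ ?_ ?_
      · intro p hp
        simp only [hPdef, mem_filter, mem_univ, true_and] at hp
        simp only [hD, mem_filter, mem_univ, true_and]
        exact hp.2 ▸ hp.1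
      · intro p hp q hq h
        simp only [mem_filter] at hp hq
        exact Prod.ext h (hp.2.trans hq.2.symm)
      · intro u hu
        simp only [hD, mem_filter, mem_univ, true_and] at hu
        exact ⟨(u, v), by simp [hPdef, hu], rfl⟩
    rw [h1, h2, h3]
  -- Step 2 : double counting upper bound
  have hupper : ∑ v, (d v).descFactorial r ≤ (s - 1) * N ^ r := by
    set T : Finset ((Fin r ↪ Fin N) × Fin (N ^ r)) :=
      univ.filter fun p => ∀ i, p.1 i ∈ D p.2 with hT
    have ha : T.card = ∑ v, (d v).descFactorial r := by
      rw [Finset.card_eq_sum_card_fiberwise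
        (f := Prod.snd) (t := univ) (fun p _ => mem_univ _)]
      refine Finset.sum_congr rfl fun v _ => ?_
      have hb : (T.filter fun p => p.2 = v).card
          = (univ.filter fun f : Fin r ↪ Fin N => ∀ i, f i ∈ D v).card := by
        refine Finset.card_bij (fun p _ => p.1) ?_ ?_ ?_
        · intro p hp
          simp only [hT, mem_filter, mem_univ, true_and] at hp
          simp only [mem_filter, mem_univ, true_and]
          exact hp.2 ▸ hp.1
        · intro p hp q hq h
          simp only [mem_filter] at hp hq
          exact Prod.ext h (hp.2.trans hq.2.symm)
        · intro f hf
          simp only [mem_filter, mem_univ, true_and] at hf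
          exact ⟨(f, v), by simp [hT, hf], rfl⟩
      rw [hb, ← Fintype.card_subtype]
      have hc : Fintype.card {f : Fin r ↪ Fin N // ∀ i, f i ∈ D v}
          = Fintype.card (Fin r ↪ {x // x ∈ D v}) := by
        refine Fintype.card_congr ⟨?_, ?_, ?_, ?_⟩
        · exact fun f => ⟨fun i => ⟨f.1 i, f.2 i⟩,
            fun i j h => f.1.injective (congrArg Subtype.val h)⟩
        · exact fun g => ⟨⟨fun i => (g i : Fin N),
            fun i j h => g.injective (Subtype.ext h)⟩, fun i => (g i).2⟩
        · intro f; rfl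
        · intro g; rfl
      rw [hc, Fintype.card_embedding_eq, Fintype.card_coe, Fintype.card_fin]
    rw [← ha]
    have hb2 : ∀ f : Fin r ↪ Fin N, (T.filter fun p => p.1 = f).card ≤ s - 1 := by
      intro f
      by_contra hc
      push_neg at hc
      have hs' : s ≤ (T.filter fun p => p.1 = f).card := by omega
      obtain ⟨B0, hB0sub, hB0card⟩ := Finset.exists_subset_card_eq hs'
      refine hfree ⟨(univ : Finset (Fin r)).image
          (fun i => (Sum.inl (f i) : Fin N ⊕ Fin (N ^ r))),
        B0.image (fun p => (Sum.inr p.2 : Fin N ⊕ Fin (N ^ r))), ?_, ?_, ?_, ?_⟩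
      · have hinj : Function.Injective
            (fun i : Fin r => (Sum.inl (f i) : Fin N ⊕ Fin (N ^ r))) :=
          fun i j h => f.injective (Sum.inl.inj h)
        rw [Finset.card_image_of_injective _ hinj, Finset.card_univ, Fintype.card_fin]
      · rw [Finset.card_image_of_injOn, hB0card]
        intro p hp q hq h
        have hp' := hB0sub hp
        have hq' := hB0sub hq
        simp only [mem_filter] at hp' hq'
        exact Prod.ext (hp'.2.trans hq'.2.symm) (Sum.inr.inj h)
      · rw [Finset.disjoint_left]
        intro a haA haB
        simp only [mem_image] at haA haB
        obtain ⟨i, _, rfl⟩ := haA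
        obtain ⟨p, _, hp⟩ := haB
        exact Sum.inl_ne_inr hp.symm
      · intro a haA b hbB
        simp only [mem_image] at haA hbB
        obtain ⟨i, _, rfl⟩ := haA
        obtain ⟨p, hpB0, rfl⟩ := hbB
        have hp' := hB0sub hpB0
        simp only [hT, mem_filter, mem_univ, true_and] at hp'
        have h5 := hp'.1 i
        rw [hp'.2] at h5
        simp only [hD, mem_filter, mem_univ, true_and] at h5
        exact h5
    calc T.card = ∑ f : Fin r ↪ Fin N, (T.filter fun p => p.1 = f).card :=
          Finset.card_eq_sum_card_fiberwise (f := Prod.fst) (t := univ)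
            (fun p _ => mem_univ _)
      _ ≤ ∑ _f : Fin r ↪ Fin N, (s - 1) := Finset.sum_le_sum fun f _ => hb2 f
      _ = Fintype.card (Fin r ↪ Fin N) * (s - 1) := by
          simp [Finset.sum_const, Finset.card_univ, mul_comm]
      _ = N.descFactorial r * (s - 1) := by
          rw [Fintype.card_embedding_eq, Fintype.card_fin, Fintype.card_fin]
      _ ≤ N ^ r * (s - 1) := Nat.mul_le_mul_right _ (Nat.descFactorial_le_pow N r)
      _ = (s - 1) * N ^ r := mul_comm _ _
  -- Step 3 : conclude
  by_contra hcon
  push_neg at hcon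
  rw [hP] at hcon
  have hsdf : s ≤ s.descFactorial (r - 1) := by
    obtain ⟨j, hj⟩ : ∃ j, r - 1 = j + 1 := ⟨r - 2, by omega⟩
    obtain ⟨s', rfl⟩ : ∃ s', s = s' + 1 := ⟨s - 1, by omega⟩
    rw [hj, Nat.succ_descFactorial_succ]
    exact Nat.le_mul_of_pos_right _ (descFactorial_pos' (by omega))
  have hlow : s.descFactorial (r - 1) * (N ^ r + 1) ≤ ∑ v, (d v).descFactorial r := by
    have key : ∀ v, s.descFactorial (r - 1) * (d v - (s - 1)) ≤ (d v).descFactorial r := by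
      intro v
      have := desc_lb (r - 1) s (by omega) (d v)
      rwa [show r - 1 + 1 = r by omega] at this
    calc s.descFactorial (r - 1) * (N ^ r + 1)
        ≤ s.descFactorial (r - 1) * ((∑ v, d v) - (s - 1) * N ^ r) := by
          apply Nat.mul_le_mul_left
          have hmul : (s - 1) * N ^ r = s * N ^ r - N ^ r := Nat.sub_one_mul s (N ^ r)
          have hsle : N ^ r ≤ s * N ^ r := Nat.le_mul_of_pos_left _ (by omega)
          omega
      _ ≤ s.descFactorial (r - 1) * (∑ v, (d v - (s - 1))) := by
          apply Nat.mul_le_mul_left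
          have h1 : (∑ v, d v) ≤ (∑ v, (d v - (s - 1))) + (s - 1) * N ^ r := by
            have : (s - 1) * N ^ r = ∑ _v : Fin (N ^ r), (s - 1) := by
              simp [mul_comm]
            rw [this, ← Finset.sum_add_distrib]
            exact Finset.sum_le_sum fun v _ => by omega
          omega
      _ = ∑ v, s.descFactorial (r - 1) * (d v - (s - 1)) := Finset.mul_sum _ _ _
      _ ≤ ∑ v, (d v).descFactorial r := Finset.sum_le_sum fun v _ => key v
  have hX : 1 ≤ N ^ r := Nat.one_le_pow _ _ (by omega)
  have hfin : s * (N ^ r + 1) ≤ (s - 1) * N ^ r := by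
    calc s * (N ^ r + 1) ≤ s.descFactorial (r - 1) * (N ^ r + 1) :=
          Nat.mul_le_mul_right _ hsdf
      _ ≤ ∑ v, (d v).descFactorial r := hlow
      _ ≤ (s - 1) * N ^ r := hupper
  have hmul : (s - 1) * N ^ r = s * N ^ r - N ^ r := Nat.sub_one_mul s (N ^ r)
  have hsle : N ^ r ≤ s * N ^ r := Nat.le_mul_of_pos_left _ (by omega)
  have hexp : s * (N ^ r + 1) = s * N ^ r + s := by rw [Nat.mul_add, Nat.mul_one]
  omega
end

section
/- Let k ≥ 2 and r ≥ 2 be integers and let q = (r^k − 1)/(r − 1). Every k-uniform hypergraph G with m edges contains a subhypergraph which has no copy of K^{(k)}_{r,...,r} and has at least (1/(2·k!))·m^{(q−1)/q} edges. -/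
/-!
Delete one edge from every copy of `K^{(k)}_{r,…,r}` in a `p`-random subgraph of `G`. The
subgraph has `p m` edges on average, while a copy is determined by `r` ordered edges of `G` and
survives with probability `p ^ (r ^ k)`, so on average at most `p ^ (r ^ k) (k! m) ^ r` copies
survive. Since `r ^ k = q (r - 1) + 1`, the choice `p = m ^ (-1/q) / k!` makes the second quantity
at most half of the first, which is `m ^ ((q - 1)/q) / k!`.
-/

/-- A copy of the complete `k`-partite `k`-graph `K^{(k)}_{r,…,r}` in the `k`-uniform
hypergraph `G`: `k` pairwise disjoint `r`-element vertex sets `S 0, …, S (k-1)` such that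
every set `{s₁, …, s_k}` with `s_i ∈ S i` for each `i` is an edge of `G`. -/
def HasKrrrCopy {α : Type*} [DecidableEq α] (G : Finset (Finset α)) (k r : ℕ) : Prop :=
  ∃ S : Fin k → Finset α, (∀ i, (S i).card = r) ∧
    (∀ i j, i ≠ j → Disjoint (S i) (S j)) ∧
    ∀ g : Fin k → α, (∀ i, g i ∈ S i) → Finset.image g Finset.univ ∈ G

open Finset

lemma Finset.exists_le_of_le_sum_mul {ι : Type*} {s : Finset ι} {w f : ι → ℝ} {c : ℝ}
    (hw₀ : ∀ i ∈ s, 0 ≤ w i) (hw₁ : ∑ i ∈ s, w i = 1) (h : c ≤ ∑ i ∈ s, w i * f i) :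
    ∃ i ∈ s, c ≤ f i := by
  have hsum : 0 < ∑ i ∈ s, w i := hw₁ ▸ one_pos
  obtain ⟨i, hi, hmax⟩ := s.exists_mem_eq_sup' (nonempty_of_sum_ne_zero hsum.ne') f
  refine ⟨i, hi, h.trans ?_⟩
  simpa [centerMass, hw₁, hmax] using centerMass_le_sup (f := f) hw₀ hsum

section BernoulliWeight

variable {β : Type*} [DecidableEq β]

/-- The probability that the `p`-random subset of `s` equals `t`. -/
def bernoulliWeight (p : ℝ) (s t : Finset β) : ℝ := p ^ #t * (1 - p) ^ #(s \ t)

lemma bernoulliWeight_nonneg {p : ℝ} (hp₀ : 0 ≤ p) (hp₁ : p ≤ 1) (s t : Finset β) :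
    0 ≤ bernoulliWeight p s t := by
  have := sub_nonneg.2 hp₁
  unfold bernoulliWeight
  positivity

lemma sum_bernoulliWeight_mul_ite_subset (p : ℝ) {s E : Finset β} (hE : E ⊆ s) :
    ∑ t ∈ s.powerset, bernoulliWeight p s t * (if E ⊆ t then 1 else 0) = p ^ #E := by
  calc ∑ t ∈ s.powerset, bernoulliWeight p s t * (if E ⊆ t then 1 else 0)
      = ∑ t ∈ s.powerset, (∏ _i ∈ t, p) * ∏ i ∈ s \ t, if i ∈ E then 0 else 1 - p := by
        refine sum_congr rfl fun t _ => ?_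
        by_cases hEt : E ⊆ t
        · rw [if_pos hEt, mul_one, bernoulliWeight, prod_const, prod_eq_pow_card]
          exact fun i hi => if_neg fun hiE => (mem_sdiff.1 hi).2 (hEt hiE)
        · obtain ⟨i, hiE, hit⟩ := not_subset.1 hEt
          rw [if_neg hEt, mul_zero, prod_eq_zero (mem_sdiff.2 ⟨hE hiE, hit⟩)
            (if_pos hiE : (if i ∈ E then (0 : ℝ) else 1 - p) = 0), mul_zero]
    _ = ∏ i ∈ s, (p + if i ∈ E then 0 else 1 - p) := (prod_add _ _ s).symm
    _ = ∏ i ∈ s, if i ∈ E then p else 1 := prod_congr rfl fun i _ => by split_ifs <;> ring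
    _ = p ^ #E := by rw [prod_ite_mem, inter_eq_right.2 hE, prod_const]

lemma sum_bernoulliWeight (p : ℝ) (s : Finset β) :
    ∑ t ∈ s.powerset, bernoulliWeight p s t = 1 := by
  simpa using sum_bernoulliWeight_mul_ite_subset p (empty_subset s)

lemma sum_bernoulliWeight_mul_card (p : ℝ) (s : Finset β) :
    ∑ t ∈ s.powerset, bernoulliWeight p s t * #t = p * #s := by
  calc ∑ t ∈ s.powerset, bernoulliWeight p s t * #t
      = ∑ t ∈ s.powerset, ∑ e ∈ s, bernoulliWeight p s t * (if {e} ⊆ t then 1 else 0) := by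
        refine sum_congr rfl fun t ht => ?_
        rw [← mul_sum]
        simp [sum_ite_mem, inter_eq_right.2 (mem_powerset.1 ht)]
    _ = ∑ e ∈ s, p := by
        rw [sum_comm]
        exact sum_congr rfl fun e he => by
          rw [sum_bernoulliWeight_mul_ite_subset p (singleton_subset_iff.2 he), card_singleton,
            pow_one]
    _ = p * #s := by simp [mul_comm]

end BernoulliWeight

section Grid

variable {α : Type*} [DecidableEq α] {k r : ℕ}

def gridEdge (φ : Fin k × Fin r → α) (g : Fin k → Fin r) : Finset α :=
  image (fun i => φ (i, g i)) univ

def gridEdges (φ : Fin k × Fin r → α) : Finset (Finset α) :=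
  image (gridEdge φ) univ

open scoped Classical in
/-- Labelled copies of `K^{(k)}_{r,…,r}` in `H`: row `i` of the grid is the part `S i`. The
vertex set `V` only serves to make this a `Finset`. -/
noncomputable def grids (k r : ℕ) (V : Finset α) (H : Finset (Finset α)) :
    Finset (Fin k × Fin r → α) :=
  {φ ∈ Fintype.piFinset fun _ => V | Function.Injective φ ∧ gridEdges φ ⊆ H}

lemma mem_grids {V : Finset α} {H : Finset (Finset α)} {φ : Fin k × Fin r → α} :
    φ ∈ grids k r V H ↔ (∀ x, φ x ∈ V) ∧ Function.Injective φ ∧ gridEdges φ ⊆ H := by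
  simp [grids]

lemma gridEdge_injective {φ : Fin k × Fin r → α} (hφ : Function.Injective φ) :
    Function.Injective (gridEdge φ) := by
  intro g g' h
  funext i
  have hmem : φ (i, g i) ∈ gridEdge φ g' := h ▸ mem_image_of_mem _ (mem_univ i)
  obtain ⟨i', -, hi'⟩ := mem_image.1 hmem
  obtain ⟨rfl, hg⟩ := Prod.mk.inj (hφ hi')
  exact hg.symm

lemma card_gridEdges {φ : Fin k × Fin r → α} (hφ : Function.Injective φ) :
    #(gridEdges φ) = r ^ k := by
  rw [gridEdges, card_image_of_injective _ (gridEdge_injective hφ), card_univ,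
    Fintype.card_fun, Fintype.card_fin, Fintype.card_fin]

lemma grids_eq_filter {V : Finset α} {G t : Finset (Finset α)} (ht : t ⊆ G) :
    grids k r V t = {φ ∈ grids k r V G | gridEdges φ ⊆ t} := by
  ext φ
  simp only [mem_filter, mem_grids]
  exact ⟨fun ⟨hV, hinj, hφ⟩ => ⟨⟨hV, hinj, hφ.trans ht⟩, hφ⟩,
    fun ⟨⟨hV, hinj, _⟩, hφ⟩ => ⟨hV, hinj, hφ⟩⟩

lemma not_hasKrrrCopy_empty (hr : 0 < r) : ¬ HasKrrrCopy (∅ : Finset (Finset α)) k r := by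
  rintro ⟨S, hcard, -, hedge⟩
  have hne : ∀ i, (S i).Nonempty := fun i => card_pos.1 (hcard i ▸ hr)
  exact notMem_empty _ (hedge (fun i => (hne i).choose) fun i => (hne i).choose_spec)

lemma HasKrrrCopy.grids_nonempty {V : Finset α} {H : Finset (Finset α)}
    (hV : ∀ e ∈ H, e ⊆ V) (hcopy : HasKrrrCopy H k r) : (grids k r V H).Nonempty := by
  obtain ⟨S, hcard, hdisj, hedge⟩ := hcopy
  let e : ∀ i, Fin r ≃ S i := fun i => ((S i).equivFinOfCardEq (hcard i)).symm
  let φ : Fin k × Fin r → α := fun x => e x.1 x.2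
  have hedges : gridEdges φ ⊆ H := by
    simp only [gridEdges, image_subset_iff]
    exact fun g _ => hedge (fun i => e i (g i)) fun i => (e i (g i)).2
  refine ⟨φ, mem_grids.2 ⟨fun ⟨i, j⟩ => ?_, ?_, hedges⟩⟩
  · exact hV _ (hedges (mem_image_of_mem _ (mem_univ fun _ => j)))
      (mem_image_of_mem _ (mem_univ i))
  · rintro ⟨i, j⟩ ⟨i', j'⟩ (h : (e i j : α) = e i' j')
    obtain rfl : i = i' := by
      by_contra hne
      exact disjoint_left.1 (hdisj i i' hne) (e i j).2 (h ▸ (e i' j').2)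
    rw [(e i).injective (Subtype.ext h)]

lemma exists_subset_not_hasKrrrCopy_card_le (hr : 0 < r) {V : Finset α} {H : Finset (Finset α)}
    (hV : ∀ e ∈ H, e ⊆ V) :
    ∃ G' ⊆ H, ¬ HasKrrrCopy G' k r ∧ #H ≤ #G' + #(grids k r V H) := by
  set bad := (grids k r V H).image fun φ => gridEdge φ fun _ => ⟨0, hr⟩
  refine ⟨H \ bad, sdiff_subset, fun hcopy => ?_, card_le_card_sdiff_add_card.trans
    (Nat.add_le_add_left card_image_le _)⟩
  obtain ⟨φ, hφ⟩ := hcopy.grids_nonempty fun e he => hV e (mem_sdiff.1 he).1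
  obtain ⟨hφV, hinj, hφ⟩ := mem_grids.1 hφ
  have hedge := hφ (mem_image_of_mem _ (mem_univ fun _ => ⟨0, hr⟩))
  exact (mem_sdiff.1 hedge).2
    (mem_image_of_mem _ (mem_grids.2 ⟨hφV, hinj, hφ.trans sdiff_subset⟩))

noncomputable def orderedEdges (k : ℕ) (G : Finset (Finset α)) : Finset (Fin k → α) :=
  G.biUnion fun e => univ.image fun g : Fin k ↪ e => fun i => (g i : α)

lemma mem_orderedEdges {G : Finset (Finset α)} {f : Fin k → α} (hf : Function.Injective f)
    (hG : image f univ ∈ G) : f ∈ orderedEdges k G :=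
  mem_biUnion.2 ⟨_, hG, mem_image.2
    ⟨⟨fun i => ⟨f i, mem_image_of_mem _ (mem_univ i)⟩, fun _ _ h => hf (congrArg Subtype.val h)⟩,
      mem_univ _, rfl⟩⟩

lemma card_orderedEdges_le {G : Finset (Finset α)} (huniform : ∀ e ∈ G, #e = k) :
    #(orderedEdges k G) ≤ k.factorial * #G := by
  rw [mul_comm]
  refine card_biUnion_le_card_mul _ _ _ fun e he => card_image_le.trans ?_
  rw [card_univ, Fintype.card_embedding_eq, Fintype.card_coe, huniform e he, Fintype.card_fin,
    Nat.descFactorial_self]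

/-- A grid is determined by its `r` columns, each of which is an ordered edge. -/
lemma card_grids_le (V : Finset α) {G : Finset (Finset α)} (huniform : ∀ e ∈ G, #e = k) :
    #(grids k r V G) ≤ (k.factorial * #G) ^ r := by
  calc #(grids k r V G) ≤ #(Fintype.piFinset fun _ : Fin r => orderedEdges k G) := by
        refine card_le_card_of_injOn (fun φ j i => φ (i, j)) (fun φ hφ => ?_)
          fun φ _ φ' _ h => funext fun x => congrFun (congrFun h x.2) x.1
        obtain ⟨-, hinj, hφ⟩ := mem_grids.1 hφ
        exact Fintype.mem_piFinset.2 fun j =>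
          mem_orderedEdges (fun i i' h => (Prod.mk.inj (hinj h)).1)
            (hφ (mem_image_of_mem _ (mem_univ fun _ => j)))
    _ = #(orderedEdges k G) ^ r := by simp
    _ ≤ (k.factorial * #G) ^ r := Nat.pow_le_pow_left (card_orderedEdges_le huniform) r

end Grid

section Deletion

variable {α : Type*} [DecidableEq α] {k r : ℕ}

/-- The `p`-random subgraph of `G` has on average `p * #G` edges and
`p ^ (r ^ k) * #(grids k r V G)` copies. -/
lemma exists_subset_mul_card_sub_le (V : Finset α) (G : Finset (Finset α)) {p : ℝ}
    (hp₀ : 0 ≤ p) (hp₁ : p ≤ 1) :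
    ∃ t ⊆ G, p * #G - p ^ (r ^ k) * #(grids k r V G) ≤ (#t : ℝ) - #(grids k r V t) := by
  have hcopies : ∑ t ∈ G.powerset, bernoulliWeight p G t * #(grids k r V t)
      = p ^ (r ^ k) * #(grids k r V G) := by
    calc ∑ t ∈ G.powerset, bernoulliWeight p G t * #(grids k r V t)
        = ∑ t ∈ G.powerset, ∑ φ ∈ grids k r V G,
            bernoulliWeight p G t * if gridEdges φ ⊆ t then 1 else 0 := by
          refine sum_congr rfl fun t ht => ?_
          rw [grids_eq_filter (mem_powerset.1 ht), ← mul_sum, card_filter]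
          push_cast
          rfl
      _ = ∑ φ ∈ grids k r V G, p ^ (r ^ k) := by
          rw [sum_comm]
          refine sum_congr rfl fun φ hφ => ?_
          obtain ⟨-, hinj, hφG⟩ := mem_grids.1 hφ
          rw [sum_bernoulliWeight_mul_ite_subset p hφG, card_gridEdges hinj]
      _ = p ^ (r ^ k) * #(grids k r V G) := by rw [sum_const, nsmul_eq_mul, mul_comm]
  obtain ⟨t, ht, hle⟩ := exists_le_of_le_sum_mul (f := fun t => (#t : ℝ) - #(grids k r V t))
    (c := p * #G - p ^ (r ^ k) * #(grids k r V G))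
    (fun t _ => bernoulliWeight_nonneg hp₀ hp₁ G t) (sum_bernoulliWeight p G)
    (by simp only [mul_sub, sum_sub_distrib, sum_bernoulliWeight_mul_card, hcopies, le_refl])
  exact ⟨t, mem_powerset.1 ht, hle⟩

theorem exists_subset_not_hasKrrrCopy_card_ge (hr : 0 < r) {G : Finset (Finset α)}
    (huniform : ∀ e ∈ G, #e = k) {p : ℝ} (hp₀ : 0 ≤ p) (hp₁ : p ≤ 1) :
    ∃ G' ⊆ G, ¬ HasKrrrCopy G' k r ∧
      p * #G - p ^ (r ^ k) * (k.factorial * #G) ^ r ≤ (#G' : ℝ) := by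
  obtain ⟨t, htG, ht⟩ := exists_subset_mul_card_sub_le (k := k) (r := r) (G.sup id) G hp₀ hp₁
  obtain ⟨G', hG't, hfree, hcard⟩ := exists_subset_not_hasKrrrCopy_card_le (k := k) hr
    (V := G.sup id) fun e he => le_sup (f := id) (htG he)
  refine ⟨G', hG't.trans htG, hfree, ?_⟩
  have hgrids : (#(grids k r (G.sup id) G) : ℝ) ≤ (k.factorial * #G) ^ r := by
    exact_mod_cast card_grids_le _ huniform
  have hcard' : (#t : ℝ) ≤ #G' + #(grids k r (G.sup id) t) := by exact_mod_cast hcard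
  nlinarith [mul_le_mul_of_nonneg_left hgrids (pow_nonneg hp₀ (r ^ k))]

end Deletion

/-- The choice `p = x ^ (-1/q) / F` balances the two terms when `N = q (r - 1) + 1`. -/
lemma exists_le_mul_sub_pow_mul_pow {F x : ℝ} {q r N : ℕ} (hF : 2 ≤ F) (hx : 1 ≤ x)
    (hq : 0 < q) (hr : 1 ≤ r) (hN : q * (r - 1) + 1 = N) (hrN : r + 2 ≤ N) :
    ∃ p : ℝ, 0 ≤ p ∧ p ≤ 1 ∧
      1 / (2 * F) * x ^ (((q : ℝ) - 1) / q) ≤ p * x - p ^ N * (F * x) ^ r := by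
  have hx₀ : 0 < x := by linarith
  have hq' : (0 : ℝ) < q := by exact_mod_cast hq
  set y := x ^ (-1 / (q : ℝ))
  set a := x ^ (((q : ℝ) - 1) / q)
  have hy : y ≤ 1 := Real.rpow_le_one_of_one_le_of_nonpos hx (by rw [neg_div]; simp [hq'.le])
  have hyx : y * x = a := by
    rw [← Real.rpow_add_one hx₀.ne']
    congr 1
    field_simp
    ring
  have hyNx : y ^ N * x ^ r = a := by
    rw [← Real.rpow_mul_natCast hx₀.le, ← Real.rpow_natCast x r, ← Real.rpow_add hx₀, ← hN]
    congr 1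
    push_cast [Nat.cast_sub hr]
    field_simp
    ring
  have hconst : F ^ r / F ^ N ≤ 1 / (2 * F) := by
    rw [div_le_div_iff₀ (by positivity) (by positivity), one_mul]
    calc F ^ r * (2 * F) ≤ F ^ r * (F * F) := by gcongr
      _ = F ^ (r + 2) := by ring
      _ ≤ F ^ N := pow_le_pow_right₀ (by linarith) hrN
  refine ⟨y / F, by positivity, div_le_one_of_le₀ (hy.trans (by linarith)) (by positivity), ?_⟩
  have hpx : y / F * x = 2 * (1 / (2 * F) * a) := by
    rw [← hyx]; field_simp
  have hpN : (y / F) ^ N * (F * x) ^ r = F ^ r / F ^ N * a := by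
    rw [← hyNx, div_pow, mul_pow]; ring
  have ha : 0 ≤ a := by positivity
  rw [hpx, hpN]
  nlinarith [mul_le_mul_of_nonneg_right hconst ha]

lemma pow_sub_one_div_mul_add_one {r : ℕ} (hr : 1 ≤ r) (k : ℕ) :
    (r ^ k - 1) / (r - 1) * (r - 1) + 1 = r ^ k := by
  rw [Nat.div_mul_cancel (by simpa using Nat.sub_dvd_pow_sub_pow r 1 k),
    Nat.sub_add_cancel (Nat.one_le_pow _ _ hr)]

/-- **Large `K^{(k)}_{r,…,r}`-free subhypergraphs.** Let `k, r ≥ 2` and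
`q = (r^k − 1)/(r − 1)`. Every `k`-uniform hypergraph `G` with `m` edges contains a
subhypergraph with no copy of `K^{(k)}_{r,…,r}` and at least `(1/(2·k!)) m^{(q−1)/q}`
edges. -/
theorem stmt6 {α : Type*} [DecidableEq α] (k r q m : ℕ) (hk : 2 ≤ k) (hr : 2 ≤ r)
    (hq : q = (r ^ k - 1) / (r - 1))
    (G : Finset (Finset α)) (huniform : ∀ e ∈ G, e.card = k) (hm : G.card = m) :
    ∃ G' : Finset (Finset α), G' ⊆ G ∧ ¬ HasKrrrCopy G' k r ∧
      (1 / (2 * (Nat.factorial k : ℝ))) * (m : ℝ) ^ (((q : ℝ) - 1) / (q : ℝ))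
        ≤ (G'.card : ℝ) := by
  have hN : q * (r - 1) + 1 = r ^ k := hq ▸ pow_sub_one_div_mul_add_one (by omega) k
  have hrk : r + 2 ≤ r ^ k :=
    calc r + 2 ≤ r ^ 2 := by nlinarith
      _ ≤ r ^ k := Nat.pow_le_pow_right (by omega) hk
  have hq₂ : 2 ≤ q := by
    by_contra! hq₁
    have := Nat.mul_le_mul_right (r - 1) (show q ≤ 1 by omega)
    omega
  have hF : (2 : ℝ) ≤ k.factorial := by exact_mod_cast Nat.factorial_le hk
  rcases Nat.eq_zero_or_pos m with rfl | hm₀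
  · refine ⟨∅, empty_subset G, not_hasKrrrCopy_empty (by omega), ?_⟩
    have hexp : ((q : ℝ) - 1) / q ≠ 0 := by
      have : (2 : ℝ) ≤ q := by exact_mod_cast hq₂
      exact (div_pos (by linarith) (by linarith)).ne'
    simp [Real.zero_rpow hexp]
  obtain ⟨p, hp₀, hp₁, hbound⟩ := exists_le_mul_sub_pow_mul_pow hF
    (Nat.one_le_cast.2 hm₀) (by omega) (by omega) hN hrk
  obtain ⟨G', hG', hfree, hcard⟩ :=
    exists_subset_not_hasKrrrCopy_card_ge (r := r) (by omega) huniform hp₀ hp₁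
  refine ⟨G', hG', hfree, hbound.trans ?_⟩
  simpa [hm] using hcard
end

section
/- Let t and n be positive integers and let G be a graph such that G →_ind (K_{1,t}, M_n). Then G contains a subgraph which is an (n, t)-Ruzsa–Szemerédi graph; more precisely, there exist t pairwise edge-disjoint induced matchings of G, each consisting of n edges. -/
/-- The star `K_{1,t}` with `t` edges: center `0` and `t` leaves. -/
def starGraph (t : ℕ) : SimpleGraph (Fin (t + 1)) :=
  SimpleGraph.fromRel (fun i j => i = 0 ∧ j ≠ 0)

/-- The matching `M_n` with `n` edges (`n` disjoint edges on `2n` vertices). -/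
def matchingGraph (n : ℕ) : SimpleGraph (Fin n × Fin 2) :=
  SimpleGraph.fromRel (fun a b => a.1 = b.1 ∧ a.2 ≠ b.2)

/-- `φ` is an induced copy of `H` in `G`: `φ` is injective and `φ(u)φ(v)` is an edge of
`G` if and only if `uv` is an edge of `H`. -/
def IsInducedCopy {α β : Type*} (H : SimpleGraph α) (G : SimpleGraph β) (φ : α → β) : Prop :=
  Function.Injective φ ∧ ∀ u v, H.Adj u v ↔ G.Adj (φ u) (φ v)

/-- `G →_ind (H₁, H₂)`: every red/blue coloring of the edges of `G` contains an induced
copy of `H₁` all of whose edges are red (`true`), or an induced copy of `H₂` all of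
whose edges are blue (`false`). -/
def ArrowsInd {V α β : Type*} (G : SimpleGraph V) (H₁ : SimpleGraph α)
    (H₂ : SimpleGraph β) : Prop :=
  ∀ c : Sym2 V → Bool,
    (∃ φ : α → V, IsInducedCopy H₁ G φ ∧ ∀ u v, H₁.Adj u v → c s(φ u, φ v) = true) ∨
    (∃ ψ : β → V, IsInducedCopy H₂ G ψ ∧ ∀ u v, H₂.Adj u v → c s(ψ u, ψ v) = false)

/-- `M` is an induced matching of `G`: a set of edges of `G` with pairwise disjoint
endpoints such that every edge of `G` whose endpoints are covered by `M` belongs to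
`M`. -/
def IsInducedMatchingSet {V : Type*} (G : SimpleGraph V) (M : Set (Sym2 V)) : Prop :=
  M ⊆ G.edgeSet ∧
  (∀ e ∈ M, ∀ f ∈ M, e ≠ f → ∀ v, v ∈ e → v ∉ f) ∧
  (∀ e ∈ G.edgeSet, (∀ v ∈ e, ∃ f ∈ M, v ∈ f) → e ∈ M)

/-- **From induced Ramsey to Ruzsa–Szemerédi graphs.** If `G →_ind (K_{1,t}, M_n)`, then
`G` contains a subgraph which is an `(n, t)`-Ruzsa–Szemerédi graph: there exist `t`
pairwise edge-disjoint induced matchings of `G`, each consisting of `n` edges. -/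
theorem stmt17 {V : Type*} (G : SimpleGraph V) (t n : ℕ) (ht : 0 < t) (hn : 0 < n)
    (hG : ArrowsInd G (starGraph t) (matchingGraph n)) :
    ∃ Ms : Fin t → Set (Sym2 V),
      (∀ i, IsInducedMatchingSet G (Ms i) ∧ (Ms i).ncard = n) ∧
      (∀ i j, i ≠ j → Disjoint (Ms i) (Ms j)) := by
  classical
  suffices h : ∀ k, k ≤ t → ∃ Ms : Fin k → Set (Sym2 V),
      (∀ i, IsInducedMatchingSet G (Ms i) ∧ (Ms i).ncard = n) ∧
      (∀ i j, i ≠ j → Disjoint (Ms i) (Ms j)) from h t le_rfl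
  intro k
  induction k with
  | zero => exact fun _ => ⟨fun i => i.elim0, fun i => i.elim0, fun i => i.elim0⟩
  | succ k ih =>
    intro hk1
    obtain ⟨Ms, hMs, hdisj⟩ := ih (Nat.le_of_succ_le hk1)
    have hk : k < t := hk1
    set c : Sym2 V → Bool := fun e => decide (∃ i, e ∈ Ms i) with hc
    rcases hG c with ⟨φ, ⟨hinj, hadj⟩, hred⟩ | ⟨ψ, ⟨hinj, hadj⟩, hblue⟩
    · exfalso
      have hmem : ∀ j : Fin t, ∃ i : Fin k, s(φ 0, φ j.succ) ∈ Ms i := by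
        intro j
        have hstar : (starGraph t).Adj 0 j.succ := by
          refine ⟨(Fin.succ_ne_zero j).symm, Or.inl ⟨rfl, Fin.succ_ne_zero j⟩⟩
        have := hred 0 j.succ hstar
        simpa [hc] using this
      choose g hg using hmem
      obtain ⟨j1, j2, hne, heq⟩ := Fintype.exists_ne_map_eq_of_card_lt g (by simpa using hk)
      have hφne : φ j1.succ ≠ φ j2.succ := fun h => hne (Fin.succ_injective t (hinj h))
      have hene : s(φ 0, φ j1.succ) ≠ s(φ 0, φ j2.succ) := by
        intro h
        rcases Sym2.eq_iff.mp h with ⟨_, h2⟩ | ⟨h1, h2⟩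
        · exact hφne h2
        · exact hφne (h2.trans h1)
      have h2 : s(φ 0, φ j2.succ) ∈ Ms (g j1) := heq ▸ hg j2
      exact (hMs (g j1)).1.2.1 _ (hg j1) _ h2 hene (φ 0)
        (Sym2.mem_mk_left _ _) (Sym2.mem_mk_left _ _)
    · -- blue case: new induced matching
      have hMadjM : ∀ (a : Fin n) (i j : Fin 2), i ≠ j →
          (matchingGraph n).Adj (a, i) (a, j) := by
        intro a i j h2
        refine ⟨?_, Or.inl ⟨rfl, h2⟩⟩
        intro h; exact h2 (congrArg Prod.snd h)
      have hMadj : ∀ a : Fin n, G.Adj (ψ (a, 0)) (ψ (a, 1)) := by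
        intro a
        exact (hadj _ _).mp (hMadjM a 0 1 Fin.zero_ne_one)
      set f : Fin n → Sym2 V := fun a => s(ψ (a, 0), ψ (a, 1)) with hf
      have hfinj : Function.Injective f := by
        intro a b h
        rcases Sym2.eq_iff.mp h with ⟨h1, _⟩ | ⟨h1, _⟩
        · exact congrArg Prod.fst (hinj h1)
        · have := hinj h1
          exact congrArg Prod.fst this
      set M : Set (Sym2 V) := Set.range f with hM
      have hmemM : ∀ e ∈ M, ∃ a : Fin n, e = f a := by
        rintro e ⟨a, rfl⟩; exact ⟨a, rfl⟩
      have hMsub : M ⊆ G.edgeSet := by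
        rintro e ⟨a, rfl⟩; exact hMadj a
      have hvertex : ∀ (v : V) (a : Fin n), v ∈ f a → ∃ i : Fin 2, v = ψ (a, i) := by
        intro v a hv
        rcases Sym2.mem_iff.mp hv with h | h
        · exact ⟨0, h⟩
        · exact ⟨1, h⟩
      have hMmatch : ∀ e ∈ M, ∀ e' ∈ M, e ≠ e' → ∀ v, v ∈ e → v ∉ e' := by
        rintro e ⟨a, rfl⟩ e' ⟨b, rfl⟩ hne v hv hv'
        obtain ⟨i, rfl⟩ := hvertex _ a hv
        obtain ⟨j, hj⟩ := hvertex _ b hv'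
        have : (a, i) = (b, j) := hinj hj
        exact hne (congrArg f (congrArg Prod.fst this))
      have hMind : ∀ e ∈ G.edgeSet, (∀ v ∈ e, ∃ g ∈ M, v ∈ g) → e ∈ M := by
        intro e
        induction e with
        | _ x y =>
          intro hxy hcov
          obtain ⟨ex, ⟨a, rfl⟩, hxm⟩ := hcov x (Sym2.mem_mk_left x y)
          obtain ⟨ey, ⟨b, rfl⟩, hym⟩ := hcov y (Sym2.mem_mk_right x y)
          obtain ⟨i, rfl⟩ := hvertex _ a hxm
          obtain ⟨j, rfl⟩ := hvertex _ b hym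
          have hadj' : (matchingGraph n).Adj (a, i) (b, j) := (hadj _ _).mpr hxy
          obtain ⟨hneq, hr⟩ := hadj'
          have hab : a = b ∧ i ≠ j := by
            rcases hr with ⟨h1, h2⟩ | ⟨h1, h2⟩
            · exact ⟨h1, h2⟩
            · exact ⟨h1.symm, h2.symm⟩
          obtain ⟨rfl, hij⟩ := hab
          refine ⟨a, ?_⟩
          fin_cases i <;> fin_cases j <;> simp_all [hf, Sym2.eq_swap]
      have hMcard : M.ncard = n := by
        rw [hM, ← Set.image_univ, Set.ncard_image_of_injective _ hfinj,
          Set.ncard_univ, Nat.card_eq_fintype_card, Fintype.card_fin]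
      have hMblue : ∀ e ∈ M, ∀ i : Fin k, e ∉ Ms i := by
        rintro e ⟨a, rfl⟩ i hi
        have := hblue (a, 0) (a, 1) (hMadjM a 0 1 Fin.zero_ne_one)
        rw [hc] at this
        simp only [decide_eq_false_iff_not] at this
        exact this ⟨i, hi⟩
      refine ⟨Fin.cons M Ms, ?_, ?_⟩
      · intro i
        refine Fin.cases ?_ ?_ i
        · exact ⟨⟨hMsub, hMmatch, hMind⟩, hMcard⟩
        · intro j; simpa using hMs j
      · intro i j hij
        rcases Fin.eq_zero_or_eq_succ i with rfl | ⟨i', rfl⟩ <;>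
          rcases Fin.eq_zero_or_eq_succ j with rfl | ⟨j', rfl⟩
        · exact absurd rfl hij
        · simp only [Fin.cons_zero, Fin.cons_succ]
          exact Set.disjoint_left.mpr fun e he => hMblue e he j'
        · simp only [Fin.cons_zero, Fin.cons_succ]
          exact (Set.disjoint_left.mpr fun e he => hMblue e he i').symm
        · simp only [Fin.cons_succ]
          exact hdisj i' j' fun h => hij (congrArg Fin.succ h)
end

section
/- Let n and N be positive integers and let c ≥ 2 be a real number such that cn and N/c are positive integers. Let G be a bipartite graph on N vertices whose edge set is the union of N/c pairwise edge-disjoint induced matchings of G, each of size cn. Then G →_ind (K_{1,n}, M_n): every red/blue coloring of the edges of G contains an induced copy of the star K_{1,n} all of whose edges are red, or an induced copy of the matching M_n all of whose edges are blue. -/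
/-!
Suppose a colouring has neither. Neighbourhoods in a bipartite graph are independent, so any `n`
red edges at a vertex span an induced red star: every red degree is below `n`. Any `n` edges of an
induced matching span an induced `M_n`: each of the `t` matchings has fewer than `n` blue edges,
hence more than `s - n` red ones. Counting red edges, the handshake lemma gives
`2 · #red + N ≤ N n` while the disjoint matchings give `#red ≥ t (s - n + 1)`; with `t s = N n` and
`2 t ≤ N` this forces `N + 2 t ≤ 0`.
-/

open Finset Function

lemma Finset.exists_injective_fin_of_le_card {α : Type*} {s : Finset α} {t : ℕ}
    (h : t ≤ #s) : ∃ f : Fin t → α, Injective f ∧ ∀ i, f i ∈ s := by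
  obtain ⟨e⟩ := Function.Embedding.nonempty_of_card_le (α := Fin t) (β := s) (by simpa)
  exact ⟨fun i ↦ e i, fun _ _ h ↦ e.injective (Subtype.ext h), fun i ↦ (e i).2⟩

lemma Set.sum_ncard_le_ncard_of_pairwise_disjoint {ι α : Type*} [Fintype ι] {s : ι → Set α}
    {u : Set α} (hu : u.Finite) (hdisj : Pairwise (Disjoint on s)) (hsub : ∀ i, s i ⊆ u) :
    ∑ i, (s i).ncard ≤ u.ncard := by
  rw [← finsum_eq_sum_of_fintype, ← Set.ncard_iUnion_of_finite (fun i ↦ hu.subset (hsub i)) hdisj]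
  exact Set.ncard_le_ncard (Set.iUnion_subset hsub) hu

namespace SimpleGraph

lemma cliqueFree_three_of_bipartite {V : Type*} {G : SimpleGraph V} {A : Set V}
    (hbip : ∀ u v, G.Adj u v → (u ∈ A ↔ v ∉ A)) : G.CliqueFree 3 := by
  classical
  have C : G.Coloring Bool := Coloring.mk (fun v ↦ decide (v ∈ A)) fun {u v} huv ↦ by
    have := hbip u v huv
    simp only [ne_eq, decide_eq_decide]
    tauto
  exact C.colorable.cliqueFree (by simp)

section Counting

variable {V : Type*} [Fintype V]

lemma two_mul_card_edgeFinset_add_card_le (R : SimpleGraph V) [DecidableRel R.Adj] {n : ℕ}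
    (h : ∀ v, R.degree v < n) : 2 * #R.edgeFinset + Fintype.card V ≤ Fintype.card V * n :=
  calc 2 * #R.edgeFinset + Fintype.card V = ∑ v, (R.degree v + 1) := by
        simp [Finset.sum_add_distrib, sum_degrees_eq_twice_card_edges]
    _ ≤ ∑ _v : V, n := Finset.sum_le_sum fun v _ ↦ h v
    _ = Fintype.card V * n := by simp

theorem two_mul_mul_succ_add_card_le (R : SimpleGraph V) [DecidableRel R.Adj] {n s t : ℕ}
    (hdeg : ∀ v, R.degree v < n) {Ms : Fin t → Set (Sym2 V)} (hdisj : Pairwise (Disjoint on Ms))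
    (hcard : ∀ i, (Ms i).ncard = s) (hout : ∀ i, (Ms i \ R.edgeSet).ncard < n) :
    2 * t * (s + 1) + Fintype.card V ≤ Fintype.card V * n + 2 * t * n := by
  have hR := R.two_mul_card_edgeFinset_add_card_le hdeg
  have hin : ∑ i, (Ms i ∩ R.edgeSet).ncard ≤ #R.edgeFinset := by
    rw [← Set.ncard_coe_finset, coe_edgeFinset]
    exact Set.sum_ncard_le_ncard_of_pairwise_disjoint (Set.toFinite _)
      (fun i j hij ↦ (hdisj hij).mono Set.inter_subset_left Set.inter_subset_left)
      fun i ↦ Set.inter_subset_right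
  have hsplit i : s + 1 ≤ (Ms i ∩ R.edgeSet).ncard + n := by
    have := (Set.ncard_inter_add_ncard_sdiff_eq_ncard (Ms i) R.edgeSet).trans (hcard i)
    linarith [hout i]
  have hsum : t * (s + 1) ≤ ∑ i, (Ms i ∩ R.edgeSet).ncard + t * n :=
    calc t * (s + 1) = ∑ _i : Fin t, (s + 1) := by simp
      _ ≤ ∑ i, ((Ms i ∩ R.edgeSet).ncard + n) := Finset.sum_le_sum fun i _ ↦ hsplit i
      _ = ∑ i, (Ms i ∩ R.edgeSet).ncard + t * n := by simp [Finset.sum_add_distrib]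
  linarith

end Counting

end SimpleGraph

@[simp] lemma starGraph_adj_zero_succ {t : ℕ} (i : Fin t) : (starGraph t).Adj 0 i.succ := by
  simp [starGraph, (Fin.succ_ne_zero i).symm]

@[simp] lemma starGraph_adj_succ_zero {t : ℕ} (i : Fin t) : (starGraph t).Adj i.succ 0 :=
  (starGraph_adj_zero_succ i).symm

@[simp] lemma starGraph_not_adj_succ_succ {t : ℕ} (i j : Fin t) :
    ¬ (starGraph t).Adj i.succ j.succ := by
  simp [starGraph]

lemma isInducedCopy_starGraph_cons {V : Type*} {G : SimpleGraph V} {t : ℕ} {v : V}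
    {g : Fin t → V} (hg : Injective g) (hadj : ∀ i, G.Adj v (g i))
    (hind : ∀ i j, ¬ G.Adj (g i) (g j)) :
    IsInducedCopy (starGraph t) G (Fin.cons v g : Fin (t + 1) → V) := by
  refine ⟨Fin.cons_injective_of_injective (fun ⟨i, hi⟩ ↦ (hadj i).ne hi.symm) hg, fun a b ↦ ?_⟩
  cases a using Fin.cases <;> cases b using Fin.cases <;> simp [hadj, hind, (hadj _).symm]

theorem exists_inducedCopy_starGraph_of_cliqueFree {V : Type*} {G R : SimpleGraph V}
    (hG : G.CliqueFree 3) (hRG : R ≤ G) {v : V} [Fintype (R.neighborSet v)] {t : ℕ}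
    (h : t ≤ R.degree v) :
    ∃ φ : Fin (t + 1) → V, IsInducedCopy (starGraph t) G φ ∧
      ∀ a b, (starGraph t).Adj a b → R.Adj (φ a) (φ b) := by
  obtain ⟨g, hg, hgR⟩ := Finset.exists_injective_fin_of_le_card h
  simp only [SimpleGraph.mem_neighborFinset] at hgR
  have hind : ∀ i j, ¬ G.Adj (g i) (g j) := fun i j hij ↦
    SimpleGraph.isIndepSet_neighborSet_of_triangleFree G hG v (hRG (hgR i)) (hRG (hgR j)) hij.ne hij
  refine ⟨Fin.cons v g, isInducedCopy_starGraph_cons hg (fun i ↦ hRG (hgR i)) hind, fun a b ↦ ?_⟩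
  cases a using Fin.cases <;> cases b using Fin.cases <;> simp [hgR, (hgR _).symm]

section Matching

variable {V : Type*} {t : ℕ}

lemma matchingGraph_adj {a b : Fin t × Fin 2} :
    (matchingGraph t).Adj a b ↔ a.1 = b.1 ∧ a.2 ≠ b.2 := by
  simp only [matchingGraph, SimpleGraph.fromRel_adj]
  constructor
  · rintro ⟨-, h | h⟩
    exacts [h, ⟨h.1.symm, h.2.symm⟩]
  · intro h
    exact ⟨fun hab ↦ h.2 (congrArg Prod.snd hab), Or.inl h⟩

def matchingMap (x y : Fin t → V) (a : Fin t × Fin 2) : V := ![x a.1, y a.1] a.2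

lemma matchingMap_mem (x y : Fin t → V) (a : Fin t × Fin 2) :
    matchingMap x y a ∈ s(x a.1, y a.1) := by
  obtain ⟨i, b⟩ := a
  fin_cases b <;> simp [matchingMap]

lemma mk_matchingMap_of_adj (x y : Fin t → V) {a b : Fin t × Fin 2}
    (hab : (matchingGraph t).Adj a b) :
    s(matchingMap x y a, matchingMap x y b) = s(x a.1, y a.1) := by
  obtain ⟨i, x₁⟩ := a
  obtain ⟨j, x₂⟩ := b
  obtain ⟨rfl, hx⟩ := matchingGraph_adj.1 hab
  fin_cases x₁ <;> fin_cases x₂ <;> simp_all [matchingMap, Sym2.eq_swap]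

lemma IsInducedMatchingSet.eq_of_mem {G : SimpleGraph V} {M : Set (Sym2 V)}
    (hM : IsInducedMatchingSet G M) {e f : Sym2 V} {v : V} (he : e ∈ M) (hf : f ∈ M)
    (hve : v ∈ e) (hvf : v ∈ f) : e = f :=
  by_contra fun hef ↦ hM.2.1 e he f hf hef v hve hvf

lemma IsInducedMatchingSet.isInducedCopy_matchingMap {G : SimpleGraph V} {M : Set (Sym2 V)}
    (hM : IsInducedMatchingSet G M) {x y : Fin t → V} (hinj : Injective fun i ↦ s(x i, y i))
    (hxyM : ∀ i, s(x i, y i) ∈ M) : IsInducedCopy (matchingGraph t) G (matchingMap x y) := by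
  have hfst a b (hab : matchingMap x y a = matchingMap x y b) : a.1 = b.1 :=
    hinj (hM.eq_of_mem (hxyM _) (hxyM _) (matchingMap_mem x y a) (hab ▸ matchingMap_mem x y b))
  refine ⟨fun a b hab ↦ ?_, fun a b ↦ ⟨fun hab ↦ ?_, fun hab ↦ ?_⟩⟩
  · by_contra hne
    have hadj : (matchingGraph t).Adj a b :=
      matchingGraph_adj.2 ⟨hfst a b hab, fun h2 ↦ hne (Prod.ext (hfst a b hab) h2)⟩
    have hdiag := G.not_isDiag_of_mem_edgeSet (hM.1 (hxyM a.1))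
    rw [← mk_matchingMap_of_adj x y hadj, hab, Sym2.mk_isDiag_iff] at hdiag
    exact hdiag rfl
  · change s(matchingMap x y a, matchingMap x y b) ∈ G.edgeSet
    rw [mk_matchingMap_of_adj x y hab]
    exact hM.1 (hxyM _)
  · have hmem : s(matchingMap x y a, matchingMap x y b) ∈ M := hM.2.2 _ hab fun v hv ↦ by
      rcases Sym2.mem_iff.1 hv with rfl | rfl
      exacts [⟨_, hxyM a.1, matchingMap_mem x y a⟩, ⟨_, hxyM b.1, matchingMap_mem x y b⟩]
    have h1 : a.1 = b.1 := hinj <|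
      (hM.eq_of_mem hmem (hxyM a.1) (Sym2.mem_mk_left _ _) (matchingMap_mem x y a)).symm.trans
        (hM.eq_of_mem hmem (hxyM b.1) (Sym2.mem_mk_right _ _) (matchingMap_mem x y b))
    exact matchingGraph_adj.2
      ⟨h1, fun h2 ↦ hab.ne (congrArg (matchingMap x y) (Prod.ext h1 h2))⟩

theorem IsInducedMatchingSet.exists_inducedCopy_matchingGraph {G : SimpleGraph V}
    {M S : Set (Sym2 V)} (hM : IsInducedMatchingSet G M) (hSM : S ⊆ M) (hS : S.Finite)
    (h : t ≤ S.ncard) :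
    ∃ ψ : Fin t × Fin 2 → V, IsInducedCopy (matchingGraph t) G ψ ∧
      ∀ a b, (matchingGraph t).Adj a b → s(ψ a, ψ b) ∈ S := by
  obtain ⟨E, hE, hES⟩ := Finset.exists_injective_fin_of_le_card (s := hS.toFinset) (t := t)
    (by rwa [← Set.ncard_eq_toFinset_card _ hS])
  simp only [Set.Finite.mem_toFinset] at hES
  choose x y hxy using fun i ↦
    Sym2.ind (f := fun e ↦ ∃ a b, s(a, b) = e) (fun a b ↦ ⟨a, b, rfl⟩) (E i)
  obtain rfl : (fun i ↦ s(x i, y i)) = E := funext hxy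
  exact ⟨matchingMap x y, hM.isInducedCopy_matchingMap hE fun i ↦ hSM (hES i),
    fun a b hab ↦ mk_matchingMap_of_adj x y hab ▸ hES a.1⟩

end Matching

theorem stmt18_general {V : Type*} [Fintype V] (G : SimpleGraph V) (n N s t : ℕ)
    (hN : 0 < N) (c : ℝ) (hc : 2 ≤ c)
    (hs : (s : ℝ) = c * n)
    (ht : (t : ℝ) = (N : ℝ) / c)
    (hcard : Fintype.card V = N)
    (A : Finset V) (hbip : ∀ u v, G.Adj u v → (u ∈ A ↔ v ∉ A))
    (Ms : Fin t → Set (Sym2 V))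
    (hM : ∀ i, IsInducedMatchingSet G (Ms i) ∧ (Ms i).ncard = s)
    (hdisj : ∀ i j, i ≠ j → Disjoint (Ms i) (Ms j)) :
    ArrowsInd G (starGraph n) (matchingGraph n) := by
  classical
  have hts : t * s = N * n := by
    have : (t * s : ℝ) = N * n := by rw [ht, hs]; field_simp
    exact_mod_cast this
  have h2t : 2 * t ≤ N := by
    have : (2 * t : ℝ) ≤ N := by
      rw [ht, mul_div_assoc']
      exact div_le_of_le_mul₀ (by positivity) (by positivity) (by nlinarith)
    exact_mod_cast this
  intro col
  let R := G.deleteEdges {e | col e = false}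
  by_cases hstar : ∃ v, n ≤ R.degree v
  · obtain ⟨v, hv⟩ := hstar
    obtain ⟨φ, hφ, hφR⟩ := exists_inducedCopy_starGraph_of_cliqueFree
      (SimpleGraph.cliqueFree_three_of_bipartite (A := A) hbip) (G.deleteEdges_le _) hv
    exact Or.inl ⟨φ, hφ, fun a b hab ↦ by
      simpa using ((SimpleGraph.deleteEdges_adj ..).1 (hφR a b hab)).2⟩
  by_cases hmatch : ∃ i, n ≤ (Ms i \ R.edgeSet).ncard
  · obtain ⟨i, hi⟩ := hmatch
    obtain ⟨ψ, hψ, hψB⟩ :=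
      (hM i).1.exists_inducedCopy_matchingGraph Set.sdiff_subset (Set.toFinite _) hi
    refine Or.inr ⟨ψ, hψ, fun a b hab ↦ ?_⟩
    obtain ⟨he, hred⟩ := hψB a b hab
    simpa [R, (hM i).1.1 he] using hred
  push Not at hstar hmatch
  have hcount := R.two_mul_mul_succ_add_card_le hstar (fun i j hij ↦ hdisj i j hij)
    (fun i ↦ (hM i).2) hmatch
  rw [hcard] at hcount
  linarith [Nat.mul_le_mul_right n h2t]

/-- **From bipartite Ruzsa–Szemerédi graphs to induced Ramsey.** Let `c ≥ 2` be real
with `s = cn` and `t = N/c` positive integers, and let `G` be a bipartite graph on `N`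
vertices whose edge set is the union of `t = N/c` pairwise edge-disjoint induced
matchings, each of size `s = cn`. Then `G →_ind (K_{1,n}, M_n)`. -/
theorem stmt18 {V : Type*} [Fintype V] (G : SimpleGraph V) (n N s t : ℕ)
    (hn : 0 < n) (hN : 0 < N) (c : ℝ) (hc : 2 ≤ c)
    (hs : (s : ℝ) = c * n) (hspos : 0 < s)
    (ht : (t : ℝ) = (N : ℝ) / c) (htpos : 0 < t)
    (hcard : Fintype.card V = N)
    (A : Finset V) (hbip : ∀ u v, G.Adj u v → (u ∈ A ↔ v ∉ A))
    (Ms : Fin t → Set (Sym2 V))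
    (hM : ∀ i, IsInducedMatchingSet G (Ms i) ∧ (Ms i).ncard = s)
    (hdisj : ∀ i j, i ≠ j → Disjoint (Ms i) (Ms j))
    (hcover : G.edgeSet = ⋃ i, Ms i) :
    ArrowsInd G (starGraph n) (matchingGraph n) :=
  stmt18_general G n N s t hN c hc hs ht hcard A hbip Ms hM hdisj
end

section
/- Let r and n be positive integers and let G be a tripartite graph with parts V₀, V₁, V₂ (so every edge of G joins vertices in two distinct parts), where |V₁| = |V₂| = n, |V₀| = cn for a real number c > 0, and every pair (v₁, v₂) ∈ V₁ × V₂ is an edge of G. Let χ be an r-coloring of the edges of G and suppose there is a collection of n² pairwise edge-disjoint triangles of G, each monochromatic under χ, whose union covers all edges between V₁ and V₂. Then G contains at least (4cr)^{−2^{r+3}}·n³ monochromatic triangles. -/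
set_option maxHeartbeats 3200000 in
theorem aux_count19 {α : Type*} [Fintype α] [DecidableEq α]
    (r n : ℕ) (hr : 0 < r) (hn : 0 < n) (c : ℝ) (hc1 : 1 ≤ c)
    (V0 V1 V2 : Finset α)
    (hd01 : Disjoint V0 V1) (hd02 : Disjoint V0 V2) (hd12 : Disjoint V1 V2)
    (G : SimpleGraph α) (χ : Sym2 α → Fin r)
    (h1 : V1.card = n) (h2 : V2.card = n) (h0 : (V0.card : ℝ) = c * n)
    (hcomplete : ∀ u ∈ V1, ∀ v ∈ V2, G.Adj u v)
    (x : α → α → α)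
    (hx0 : ∀ u ∈ V1, ∀ w ∈ V2, x u w ∈ V0)
    (hxadj1 : ∀ u ∈ V1, ∀ w ∈ V2, G.Adj u (x u w))
    (hxadj2 : ∀ u ∈ V1, ∀ w ∈ V2, G.Adj w (x u w))
    (hxc1 : ∀ u ∈ V1, ∀ w ∈ V2, χ s(u, x u w) = χ s(u, w))
    (hxc2 : ∀ u ∈ V1, ∀ w ∈ V2, χ s(w, x u w) = χ s(u, w))
    (hxinjR : ∀ u ∈ V1, ∀ w ∈ V2, ∀ w' ∈ V2, x u w = x u w' → w = w')
    (hxinjL : ∀ u ∈ V1, ∀ u' ∈ V1, ∀ w ∈ V2, x u w = x u' w → u = u')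
    (M : Finset (Finset α))
    (hM : ∀ v ∈ V0, ∀ u ∈ V1, ∀ w ∈ V2, G.Adj u v → G.Adj w v → G.Adj u w →
      χ s(u, v) = χ s(u, w) → χ s(w, v) = χ s(u, w) → ({v, u, w} : Finset α) ∈ M) :
    (4 * c * (r : ℝ)) ^ (-((2 : ℝ) ^ (r + 3))) * (n : ℝ) ^ 3 ≤ (M.card : ℝ) := by
  classical
  have hrpos : (0:ℝ) < r := by exact_mod_cast hr
  have hnpos : (0:ℝ) < n := by exact_mod_cast hn
  have hcpos : (0:ℝ) < c := lt_of_lt_of_le one_pos hc1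
  set Q : ℝ := 4 * c * r with hQdef
  have hQpos : 0 < Q := by rw [hQdef]; positivity
  have hr1 : (1:ℝ) ≤ r := by exact_mod_cast hr
  have hrne : (r:ℝ) ≠ 0 := ne_of_gt hrpos
  have hnne : (n:ℝ) ≠ 0 := ne_of_gt hnpos
  have hcne : c ≠ 0 := ne_of_gt hcpos
  have hQ1 : 1 ≤ Q := by rw [hQdef]; nlinarith [mul_le_mul hc1 hr1 one_pos.le (by linarith : (0:ℝ) ≤ c)]
  set μ : ℕ → ℝ := fun k => n * Q ^ ((1:ℝ) - (2:ℝ)^k) with hμdef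
  have hμpos : ∀ k, 0 < μ k := fun k => mul_pos hnpos (Real.rpow_pos_of_pos hQpos _)
  have hμn : ∀ k, μ k ≤ n := by
    intro k
    have h2k : (1:ℝ) ≤ (2:ℝ)^k := one_le_pow₀ (by norm_num)
    have hle := Real.rpow_le_one_of_one_le_of_nonpos hQ1
      (by linarith : (1:ℝ) - (2:ℝ)^k ≤ 0)
    calc μ k = n * Q ^ ((1:ℝ) - (2:ℝ)^k) := rfl
      _ ≤ n * 1 := by nlinarith [Real.rpow_pos_of_pos hQpos ((1:ℝ) - (2:ℝ)^k)]
      _ = n := mul_one _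
  have hμrec : ∀ k, μ (k+1) = (μ k)^2 / (Q * n) := by
    intro k
    have hexp : (1:ℝ) - (2:ℝ)^(k+1) = ((1 - (2:ℝ)^k) + (1 - (2:ℝ)^k)) - 1 := by
      rw [pow_succ]; ring
    show (n:ℝ) * Q ^ ((1:ℝ) - (2:ℝ)^(k+1)) = ((n:ℝ) * Q ^ ((1:ℝ) - (2:ℝ)^k))^2 / (Q * n)
    rw [hexp, Real.rpow_sub hQpos, Real.rpow_add hQpos, Real.rpow_one]
    field_simp
  have hμanti : ∀ k, μ (k+1) ≤ μ k := by
    intro k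
    rw [hμrec k]
    rw [div_le_iff₀ (by positivity)]
    have h1' : μ k ≤ Q * n := (hμn k).trans (by nlinarith)
    nlinarith [hμpos k]
  have hμmono : ∀ j k : ℕ, j ≤ k → μ k ≤ μ j := fun j k h =>
    antitone_nat_of_succ_le hμanti h
  set β : ℝ := (μ r)^2 / (2*r) with hβdef
  have hβpos : 0 < β := div_pos (pow_pos (hμpos r) 2) (by positivity)
  set Δ : ℝ := (μ r)^3 / (8*r^2) with hΔdef
  -- main recursion
  have REC : ∀ sz : ℕ, ∀ S : Finset (Fin r), S.card = sz →
      ∀ A B : Finset α, A ⊆ V1 → B ⊆ V2 → A.card = B.card →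
      μ (r - sz) ≤ (A.card : ℝ) →
      (∀ j, j ∉ S → (((A ×ˢ B).filter fun p => χ s(p.1, p.2) = j).card : ℝ) < β) →
      Δ ≤ (M.card : ℝ) := by
    intro sz
    induction sz with
    | zero =>
      intro S hS A B hAV1 hBV2 hAB hμA hout
      exfalso
      rw [Nat.sub_zero] at hμA
      have hSempty : S = ∅ := Finset.card_eq_zero.1 hS
      have hfib : (A ×ˢ B).card
          = ∑ j : Fin r, ((A ×ˢ B).filter fun p => χ s(p.1, p.2) = j).card :=
        Finset.card_eq_sum_card_fiberwise fun p _ => Finset.mem_univ _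
      have htot : ((A.card:ℝ))^2
          = ∑ j : Fin r, (((A ×ˢ B).filter fun p => χ s(p.1, p.2) = j).card : ℝ) := by
        have h' : A.card * A.card
            = ∑ j : Fin r, ((A ×ˢ B).filter fun p => χ s(p.1, p.2) = j).card := by
          rw [← hfib, Finset.card_product, hAB]
        have h'' := congrArg (fun t : ℕ => (t:ℝ)) h'
        push_cast at h''
        rw [sq]; exact h''
      have hne : Nonempty (Fin r) := ⟨⟨0, hr⟩⟩
      have hlt : ∑ j : Fin r, (((A ×ˢ B).filter fun p => χ s(p.1, p.2) = j).card : ℝ)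
          < ∑ _j : Fin r, β :=
        Finset.sum_lt_sum_of_nonempty Finset.univ_nonempty
          (fun j _ => hout j (by simp [hSempty]))
      have hsumβ : ∑ _j : Fin r, β = r * β := by
        rw [Finset.sum_const, Finset.card_univ, Fintype.card_fin, nsmul_eq_mul]
      have hrβ : (r:ℝ) * β = (μ r)^2 / 2 := by
        rw [hβdef]; field_simp
      have hA2 : (μ r)^2 ≤ (A.card:ℝ)^2 := pow_le_pow_left₀ (hμpos r).le hμA 2
      have hμr2 : 0 < (μ r)^2 := pow_pos (hμpos r) 2
      rw [hsumβ, hrβ] at hlt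
      rw [htot] at hA2
      linarith
    | succ sz ih =>
      intro S hS A B hAV1 hBV2 hAB hμA hout
      have hs1r : sz + 1 ≤ r := by
        have h := Finset.card_le_univ S
        rwa [hS, Fintype.card_fin] at h
      have hmr : μ r ≤ (A.card : ℝ) := le_trans (hμmono _ _ (Nat.sub_le r (sz+1))) hμA
      have hmpos : (0:ℝ) < A.card := lt_of_lt_of_le (hμpos r) hmr
      have hfib : (A ×ˢ B).card
          = ∑ j : Fin r, ((A ×ˢ B).filter fun p => χ s(p.1, p.2) = j).card :=
        Finset.card_eq_sum_card_fiberwise fun p _ => Finset.mem_univ _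
      have htot : ((A.card:ℝ))^2
          = ∑ j : Fin r, (((A ×ˢ B).filter fun p => χ s(p.1, p.2) = j).card : ℝ) := by
        have h' : A.card * A.card
            = ∑ j : Fin r, ((A ×ˢ B).filter fun p => χ s(p.1, p.2) = j).card := by
          rw [← hfib, Finset.card_product, hAB]
        have h'' := congrArg (fun t : ℕ => (t:ℝ)) h'
        push_cast at h''
        rw [sq]; exact h''
      have hsplit := Finset.sum_filter_add_sum_filter_not Finset.univ (fun j => j ∈ S)
        (fun j => (((A ×ˢ B).filter fun p => χ s(p.1, p.2) = j).card : ℝ))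
      have hSfilter : Finset.univ.filter (fun j => j ∈ S) = S := by
        ext j; simp
      rw [hSfilter] at hsplit
      have hβ0 : (0:ℝ) ≤ β := hβpos.le
      have hcompl : ∑ j ∈ Finset.univ.filter (fun j => ¬ j ∈ S),
          (((A ×ˢ B).filter fun p => χ s(p.1, p.2) = j).card : ℝ) ≤ r * β := by
        have hle : ∀ j ∈ Finset.univ.filter (fun j => ¬ j ∈ S),
            (((A ×ˢ B).filter fun p => χ s(p.1, p.2) = j).card : ℝ) ≤ β := by
          intro j hj
          exact (hout j (Finset.mem_filter.1 hj).2).le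
        calc ∑ j ∈ Finset.univ.filter (fun j => ¬ j ∈ S),
              (((A ×ˢ B).filter fun p => χ s(p.1, p.2) = j).card : ℝ)
            ≤ (Finset.univ.filter (fun j => ¬ j ∈ S)).card • β :=
              Finset.sum_le_card_nsmul _ _ _ hle
          _ = ((Finset.univ.filter (fun j => ¬ j ∈ S)).card : ℝ) * β := nsmul_eq_mul _ _
          _ ≤ r * β := by
              have hcard : (Finset.univ.filter (fun j => ¬ j ∈ S)).card ≤ r := by
                calc (Finset.univ.filter (fun j => ¬ j ∈ S)).card
                    ≤ (Finset.univ : Finset (Fin r)).card := Finset.card_filter_le _ _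
                  _ = r := by rw [Finset.card_univ, Fintype.card_fin]
              exact mul_le_mul_of_nonneg_right (by exact_mod_cast hcard) hβ0
      have hrβ : (r:ℝ) * β = (μ r)^2 / 2 := by
        rw [hβdef]; field_simp
      have hA2 : (μ r)^2 ≤ (A.card:ℝ)^2 := pow_le_pow_left₀ (hμpos r).le hmr 2
      have hlive : ((A.card:ℝ))^2/2 ≤ ∑ j ∈ S,
          (((A ×ˢ B).filter fun p => χ s(p.1, p.2) = j).card : ℝ) := by
        linarith
      have hSne : S.Nonempty := Finset.card_pos.1 (by rw [hS]; exact Nat.succ_pos sz)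
      have hpop : ∃ i ∈ S, (A.card:ℝ)^2/(2*r)
          ≤ (((A ×ˢ B).filter fun p => χ s(p.1, p.2) = i).card : ℝ) := by
        by_contra hcon
        push_neg at hcon
        have hlt : ∑ j ∈ S, (((A ×ˢ B).filter fun p => χ s(p.1, p.2) = j).card : ℝ)
            < ∑ _j ∈ S, (A.card:ℝ)^2/(2*r) :=
          Finset.sum_lt_sum_of_nonempty hSne (fun j hj => hcon j hj)
        have hsc : ∑ _j ∈ S, (A.card:ℝ)^2/(2*r) = (S.card : ℝ) * ((A.card:ℝ)^2/(2*r)) := by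
          rw [Finset.sum_const, nsmul_eq_mul]
        have hcardr : (S.card : ℝ) ≤ r := by
          exact_mod_cast (by rw [hS]; exact hs1r : S.card ≤ r)
        have hx2 : (0:ℝ) ≤ (A.card:ℝ)^2/(2*r) := by positivity
        have h5 : (S.card : ℝ) * ((A.card:ℝ)^2/(2*r)) ≤ (r:ℝ) * ((A.card:ℝ)^2/(2*r)) :=
          mul_le_mul_of_nonneg_right hcardr hx2
        have h6 : (r:ℝ) * ((A.card:ℝ)^2/(2*r)) = (A.card:ℝ)^2/2 := by
          field_simp
        rw [hsc] at hlt
        linarith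
      obtain ⟨i, hiS, hei⟩ := hpop
      set Ei := (A ×ˢ B).filter (fun p => χ s(p.1, p.2) = i) with hEidef
      set Pv := fun v => Ei.filter (fun p => x p.1 p.2 = v) with hPvdef
      have hPsum : Ei.card = ∑ v ∈ V0, (Pv v).card := by
        apply Finset.card_eq_sum_card_fiberwise
        intro p hp
        have hp' := (Finset.mem_filter.1 hp).1
        have hpp := Finset.mem_product.1 hp'
        exact hx0 p.1 (hAV1 hpp.1) p.2 (hBV2 hpp.2)
      set Av := fun v => (Pv v).image Prod.fst with hAvdef
      set Bv := fun v => (Pv v).image Prod.snd with hBvdef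
      have hPmem : ∀ v, ∀ p ∈ Pv v,
          p.1 ∈ A ∧ p.2 ∈ B ∧ χ s(p.1, p.2) = i ∧ x p.1 p.2 = v := by
        intro v p hp
        obtain ⟨hp1, hp2⟩ := Finset.mem_filter.1 hp
        obtain ⟨hpe, hpc⟩ := Finset.mem_filter.1 hp1
        exact ⟨(Finset.mem_product.1 hpe).1, (Finset.mem_product.1 hpe).2, hpc, hp2⟩
      have hAvcard : ∀ v, (Av v).card = (Pv v).card := by
        intro v
        apply Finset.card_image_of_injOn
        intro p hp q hq hpq
        obtain ⟨hpA, hpB, hpc, hpx⟩ := hPmem v p hp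
        obtain ⟨hqA, hqB, hqc, hqx⟩ := hPmem v q hq
        have hxq : x p.1 q.2 = v := by rw [hpq]; exact hqx
        have h22 : p.2 = q.2 :=
          hxinjR p.1 (hAV1 hpA) p.2 (hBV2 hpB) q.2 (hBV2 hqB) (hpx.trans hxq.symm)
        exact Prod.ext hpq h22
      have hBvcard : ∀ v, (Bv v).card = (Pv v).card := by
        intro v
        apply Finset.card_image_of_injOn
        intro p hp q hq hpq
        obtain ⟨hpA, hpB, hpc, hpx⟩ := hPmem v p hp
        obtain ⟨hqA, hqB, hqc, hqx⟩ := hPmem v q hq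
        have hxq : x q.1 p.2 = v := by rw [hpq]; exact hqx
        have h11 : p.1 = q.1 :=
          hxinjL p.1 (hAV1 hpA) q.1 (hAV1 hqA) p.2 (hBV2 hpB) (hpx.trans hxq.symm)
        exact Prod.ext h11 hpq
      have hAvsub : ∀ v, Av v ⊆ A := by
        intro v u hu
        obtain ⟨p, hp, hpu⟩ := Finset.mem_image.1 hu
        exact hpu ▸ (hPmem v p hp).1
      have hBvsub : ∀ v, Bv v ⊆ B := by
        intro v w hw
        obtain ⟨p, hp, hpw⟩ := Finset.mem_image.1 hw
        exact hpw ▸ (hPmem v p hp).2.1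
      set eloc := fun v => ((Av v ×ˢ Bv v).filter fun p => χ s(p.1, p.2) = i).card
        with helocdef
      have hPsumR : ∑ v ∈ V0, ((Pv v).card : ℝ) = (Ei.card : ℝ) := by
        exact_mod_cast (congrArg (fun t : ℕ => (t:ℝ)) hPsum).symm
      have hsplitPv := Finset.sum_filter_add_sum_filter_not V0
        (fun v => β ≤ ((eloc v : ℝ))) (fun v => ((Pv v).card : ℝ))
      by_cases hcase : (Ei.card:ℝ)/2
          ≤ ∑ v ∈ V0.filter (fun v => β ≤ ((eloc v : ℝ))), ((Pv v).card : ℝ)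
      · -- WIN case
        set goodV := V0.filter (fun v => β ≤ ((eloc v : ℝ))) with hgooddef
        have hPvleA : ∀ v ∈ goodV, ((Pv v).card : ℝ) ≤ (A.card : ℝ) := by
          intro v _
          have h' : (Pv v).card ≤ A.card := by
            rw [← hAvcard v]; exact Finset.card_le_card (hAvsub v)
          exact_mod_cast h'
        have hgoodlb : (A.card:ℝ)/(4*r) ≤ (goodV.card : ℝ) := by
          have hsum1 : ∑ v ∈ goodV, ((Pv v).card : ℝ) ≤ (goodV.card : ℝ) * (A.card : ℝ) := by
            calc ∑ v ∈ goodV, ((Pv v).card : ℝ)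
                ≤ goodV.card • (A.card : ℝ) := Finset.sum_le_card_nsmul _ _ _ hPvleA
              _ = (goodV.card : ℝ) * (A.card : ℝ) := nsmul_eq_mul _ _
          have hhalf : (A.card:ℝ)^2/(4*r) = ((A.card:ℝ)^2/(2*r))/2 := by
            field_simp; ring
          have h2' : (A.card:ℝ)^2/(4*r) ≤ (Ei.card:ℝ)/2 := by
            rw [hhalf]; linarith [hei]
          have hEA : (A.card:ℝ)^2/(4*r) ≤ (goodV.card : ℝ) * (A.card : ℝ) :=
            le_trans h2' (le_trans hcase hsum1)
          have hEA' : (A.card:ℝ)^2 ≤ (goodV.card : ℝ) * (A.card : ℝ) * (4*r) := by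
            rwa [div_le_iff₀ (by positivity : (0:ℝ) < 4*r)] at hEA
          rw [div_le_iff₀ (by positivity : (0:ℝ) < 4*r)]
          nlinarith [hmpos]
        set Sig := goodV.sigma (fun v => (Av v ×ˢ Bv v).filter fun p => χ s(p.1, p.2) = i)
          with hSigdef
        have hSigcard : Sig.card = ∑ v ∈ goodV, eloc v := Finset.card_sigma _ _
        have hSiglb : (goodV.card : ℝ) * β ≤ (Sig.card : ℝ) := by
          have h' : ∀ v ∈ goodV, β ≤ ((eloc v : ℝ)) := fun v hv =>
            (Finset.mem_filter.1 hv).2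
          calc (goodV.card : ℝ) * β = goodV.card • β := (nsmul_eq_mul _ _).symm
            _ ≤ ∑ v ∈ goodV, ((eloc v : ℝ)) := Finset.card_nsmul_le_sum _ _ _ h'
            _ = (Sig.card : ℝ) := by rw [hSigcard]; push_cast; ring
        have hfacts : ∀ q ∈ Sig, q.1 ∈ V0 ∧ q.2.1 ∈ V1 ∧ q.2.2 ∈ V2 ∧
            ({q.1, q.2.1, q.2.2} : Finset α) ∈ M := by
          intro q hq
          obtain ⟨hq1, hq2⟩ := Finset.mem_sigma.1 hq
          have hv0 : q.1 ∈ V0 := Finset.mem_of_mem_filter _ hq1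
          obtain ⟨hq2', hqc⟩ := Finset.mem_filter.1 hq2
          obtain ⟨hu, hw⟩ := Finset.mem_product.1 hq2'
          obtain ⟨p, hp, hpu⟩ := Finset.mem_image.1 hu
          obtain ⟨hpA, hpB, hpc, hpx⟩ := hPmem q.1 p hp
          obtain ⟨p', hp', hpw⟩ := Finset.mem_image.1 hw
          obtain ⟨hp'A, hp'B, hp'c, hp'x⟩ := hPmem q.1 p' hp'
          have huV1 : q.2.1 ∈ V1 := hAV1 (hpu ▸ hpA)
          have hwV2 : q.2.2 ∈ V2 := hBV2 (hpw ▸ hp'B)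
          have hadjuv : G.Adj q.2.1 q.1 := by
            rw [← hpx, ← hpu]; exact hxadj1 p.1 (hAV1 hpA) p.2 (hBV2 hpB)
          have hadjwv : G.Adj q.2.2 q.1 := by
            rw [← hp'x, ← hpw]; exact hxadj2 p'.1 (hAV1 hp'A) p'.2 (hBV2 hp'B)
          have hcuv : χ s(q.2.1, q.1) = i := by
            rw [← hpx, ← hpu, hxc1 p.1 (hAV1 hpA) p.2 (hBV2 hpB)]; exact hpc
          have hcwv : χ s(q.2.2, q.1) = i := by
            rw [← hp'x, ← hpw, hxc2 p'.1 (hAV1 hp'A) p'.2 (hBV2 hp'B)]; exact hp'c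
          exact ⟨hv0, huV1, hwV2, hM q.1 hv0 q.2.1 huV1 q.2.2 hwV2 hadjuv hadjwv
            (hcomplete _ huV1 _ hwV2) (by rw [hcuv, hqc]) (by rw [hcwv, hqc])⟩
        have hinjM : Sig.card ≤ M.card := by
          apply Finset.card_le_card_of_injOn (fun q => ({q.1, q.2.1, q.2.2} : Finset α))
          · intro q hq
            exact (hfacts q hq).2.2.2
          · intro q hq q' hq' heq
            obtain ⟨hqv, hqu, hqw, _⟩ := hfacts q (Finset.mem_coe.1 hq)
            obtain ⟨hq'v, hq'u, hq'w, _⟩ := hfacts q' (Finset.mem_coe.1 hq')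
            simp only at heq
            have hvv : q'.1 = q.1 := by
              have hmem : q'.1 ∈ ({q.1, q.2.1, q.2.2} : Finset α) := by
                rw [heq]; simp
              rcases Finset.mem_insert.1 hmem with h' | h'
              · exact h'
              · rcases Finset.mem_insert.1 h' with h'' | h''
                · exact absurd hqu (Finset.disjoint_left.1 hd01 (h'' ▸ hq'v))
                · exact absurd hqw
                    (Finset.disjoint_left.1 hd02 ((Finset.mem_singleton.1 h'') ▸ hq'v))
            have huu : q'.2.1 = q.2.1 := by
              have hmem : q'.2.1 ∈ ({q.1, q.2.1, q.2.2} : Finset α) := by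
                rw [heq]; simp
              rcases Finset.mem_insert.1 hmem with h' | h'
              · exact absurd (h' ▸ hq'u) (Finset.disjoint_left.1 hd01 hqv)
              · rcases Finset.mem_insert.1 h' with h'' | h''
                · exact h''
                · exact absurd hqw
                    (Finset.disjoint_left.1 hd12 ((Finset.mem_singleton.1 h'') ▸ hq'u))
            have hww : q'.2.2 = q.2.2 := by
              have hmem : q'.2.2 ∈ ({q.1, q.2.1, q.2.2} : Finset α) := by
                rw [heq]; simp
              rcases Finset.mem_insert.1 hmem with h' | h'
              · exact absurd (h' ▸ hq'w) (Finset.disjoint_left.1 hd02 hqv)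
              · rcases Finset.mem_insert.1 h' with h'' | h''
                · exact absurd (h'' ▸ hq'w) (Finset.disjoint_left.1 hd12 hqu)
                · exact Finset.mem_singleton.1 h''
            rcases q with ⟨v1, u1, w1⟩
            rcases q' with ⟨v2, u2, w2⟩
            simp only at hvv huu hww
            rw [hvv, huu, hww]
        have h4r : (0:ℝ) < 4*r := by positivity
        have hstep2 : μ r/(4*r) ≤ (goodV.card : ℝ) :=
          le_trans ((div_le_div_iff_of_pos_right h4r).2 hmr) hgoodlb
        calc Δ = (μ r/(4*r)) * β := by rw [hΔdef, hβdef]; field_simp; ring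
          _ ≤ (goodV.card : ℝ) * β := mul_le_mul_of_nonneg_right hstep2 hβpos.le
          _ ≤ (Sig.card : ℝ) := hSiglb
          _ ≤ (M.card : ℝ) := by exact_mod_cast hinjM
      · -- RECURSE case
        push_neg at hcase
        have hbadsum : (Ei.card:ℝ)/2
            < ∑ v ∈ V0.filter (fun v => ¬ β ≤ ((eloc v : ℝ))), ((Pv v).card : ℝ) := by
          linarith [hsplitPv, hPsumR]
        have hexv : ∃ v ∈ V0.filter (fun v => ¬ β ≤ ((eloc v : ℝ))),
            (A.card:ℝ)^2/(Q*n) ≤ ((Pv v).card : ℝ) := by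
          by_contra hcon
          have hcon' : ∀ v ∈ V0.filter (fun v => ¬ β ≤ ((eloc v : ℝ))),
              ((Pv v).card : ℝ) ≤ (A.card:ℝ)^2/(Q*n) := by
            intro v hv
            by_contra hgt
            exact hcon ⟨v, hv, (not_le.1 hgt).le⟩
          have h1' : ∑ v ∈ V0.filter (fun v => ¬ β ≤ ((eloc v : ℝ))), ((Pv v).card : ℝ)
              ≤ ((V0.filter (fun v => ¬ β ≤ ((eloc v : ℝ)))).card : ℝ)
                * ((A.card:ℝ)^2/(Q*n)) := by
            calc ∑ v ∈ V0.filter (fun v => ¬ β ≤ ((eloc v : ℝ))), ((Pv v).card : ℝ)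
                ≤ (V0.filter (fun v => ¬ β ≤ ((eloc v : ℝ)))).card • ((A.card:ℝ)^2/(Q*n)) :=
                  Finset.sum_le_card_nsmul _ _ _ hcon'
              _ = _ := nsmul_eq_mul _ _
          have h2' : ((V0.filter (fun v => ¬ β ≤ ((eloc v : ℝ)))).card : ℝ) ≤ c * n := by
            rw [← h0]
            exact_mod_cast Finset.card_filter_le V0 _
          have h3' : ((V0.filter (fun v => ¬ β ≤ ((eloc v : ℝ)))).card : ℝ)
              * ((A.card:ℝ)^2/(Q*n)) ≤ (A.card:ℝ)^2/(4*r) := by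
            have hq : c * n * ((A.card:ℝ)^2/(Q*n)) = (A.card:ℝ)^2/(4*r) := by
              rw [hQdef]; field_simp
            calc ((V0.filter (fun v => ¬ β ≤ ((eloc v : ℝ)))).card : ℝ)
                  * ((A.card:ℝ)^2/(Q*n))
                ≤ c * n * ((A.card:ℝ)^2/(Q*n)) :=
                  mul_le_mul_of_nonneg_right h2' (by positivity)
              _ = _ := hq
          have hhalf : (A.card:ℝ)^2/(4*r) = ((A.card:ℝ)^2/(2*r))/2 := by
            field_simp; ring
          have h4' : (A.card:ℝ)^2/(4*r) ≤ (Ei.card:ℝ)/2 := by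
            rw [hhalf]; linarith [hei]
          linarith [hbadsum]
        obtain ⟨v, hvbad, hvP⟩ := hexv
        obtain ⟨hvV0, hveloc'⟩ := Finset.mem_filter.1 hvbad
        push_neg at hveloc'
        have hcards : (Av v).card = (Bv v).card := by rw [hAvcard, hBvcard]
        have hAv1 : Av v ⊆ V1 := (hAvsub v).trans hAV1
        have hBv2 : Bv v ⊆ V2 := (hBvsub v).trans hBV2
        have hScard : (S.erase i).card = sz := by
          rw [Finset.card_erase_of_mem hiS, hS]; rfl
        have hidx : r - sz = (r - (sz+1)) + 1 := by omega
        have hsize : μ (r - sz) ≤ ((Av v).card : ℝ) := by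
          rw [hidx, hμrec]
          have hsq : (μ (r - (sz+1)))^2 ≤ (A.card:ℝ)^2 :=
            pow_le_pow_left₀ (hμpos _).le hμA 2
          have hdiv : (μ (r-(sz+1)))^2/(Q*n) ≤ (A.card:ℝ)^2/(Q*n) :=
            (div_le_div_iff_of_pos_right (by positivity : (0:ℝ) < Q*n)).2 hsq
          have hAvP : ((Av v).card : ℝ) = ((Pv v).card : ℝ) := by
            exact_mod_cast congrArg (fun t : ℕ => (t:ℝ)) (hAvcard v)
          rw [hAvP]
          linarith [hvP]
        have hcolors : ∀ j, j ∉ S.erase i →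
            (((Av v ×ˢ Bv v).filter fun p => χ s(p.1, p.2) = j).card : ℝ) < β := by
          intro j hj
          rcases eq_or_ne j i with rfl | hne
          · exact hveloc'
          · have hjS : j ∉ S := fun hjS' => hj (Finset.mem_erase.2 ⟨hne, hjS'⟩)
            have hsub : ((Av v ×ˢ Bv v).filter fun p => χ s(p.1, p.2) = j)
                ⊆ ((A ×ˢ B).filter fun p => χ s(p.1, p.2) = j) :=
              Finset.filter_subset_filter _
                (Finset.product_subset_product (hAvsub v) (hBvsub v))
            exact lt_of_le_of_lt (by exact_mod_cast Finset.card_le_card hsub) (hout j hjS)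
        exact ih (S.erase i) hScard (Av v) (Bv v) hAv1 hBv2 hcards hsize hcolors
  -- apply the recursion at the top level
  have happly : Δ ≤ (M.card : ℝ) := by
    apply REC r Finset.univ (by rw [Finset.card_univ, Fintype.card_fin]) V1 V2
      (Finset.Subset.refl V1) (Finset.Subset.refl V2) (by rw [h1, h2])
    · rw [Nat.sub_self]
      have hμ0 : μ 0 = n := by
        show (n:ℝ) * Q ^ ((1:ℝ) - (2:ℝ)^(0:ℕ)) = n
        rw [pow_zero, sub_self, Real.rpow_zero, mul_one]
      rw [hμ0, h1]
    · intro j hj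
      exact absurd (Finset.mem_univ j) hj
  -- final arithmetic
  have hμr3 : (μ r)^3 = (n:ℝ)^3 * Q ^ ((3:ℝ) * ((1:ℝ) - (2:ℝ)^r)) := by
    show ((n:ℝ) * Q ^ ((1:ℝ) - (2:ℝ)^r))^3 = (n:ℝ)^3 * Q ^ ((3:ℝ) * ((1:ℝ) - (2:ℝ)^r))
    rw [mul_pow]
    congr 1
    rw [← Real.rpow_natCast (Q ^ ((1:ℝ) - (2:ℝ)^r)) 3, ← Real.rpow_mul hQpos.le]
    congr 1
    push_cast; ring
  have hE2 : (2:ℝ) ≤ (3:ℝ) * ((1:ℝ) - (2:ℝ)^r) + (2:ℝ)^(r+3) := by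
    have h8 : (2:ℝ)^(r+3) = 8 * (2:ℝ)^r := by rw [pow_add]; ring
    have h1r : (1:ℝ) ≤ (2:ℝ)^r := one_le_pow₀ (by norm_num)
    nlinarith
  have h8r : 8*(r:ℝ)^2 ≤ Q ^ ((3:ℝ) * ((1:ℝ) - (2:ℝ)^r) + (2:ℝ)^(r+3)) := by
    have hc2 : (1:ℝ) ≤ c^2 := by nlinarith
    have hQ2 : 8*(r:ℝ)^2 ≤ Q^(2:ℕ) := by
      rw [hQdef]
      nlinarith [sq_nonneg ((r:ℝ)), mul_le_mul_of_nonneg_left hc2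
        (by positivity : (0:ℝ) ≤ 8*(r:ℝ)^2)]
    calc 8*(r:ℝ)^2 ≤ Q^(2:ℕ) := hQ2
      _ = Q^((2:ℕ):ℝ) := (Real.rpow_natCast Q 2).symm
      _ ≤ Q ^ ((3:ℝ) * ((1:ℝ) - (2:ℝ)^r) + (2:ℝ)^(r+3)) := by
          apply Real.rpow_le_rpow_of_exponent_le hQ1
          push_cast
          exact hE2
  have h8pos : (0:ℝ) < 8*(r:ℝ)^2 := by positivity
  have htarget : Q ^ (-((2:ℝ)^(r+3))) * (n:ℝ)^3 ≤ Δ := by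
    rw [hΔdef, le_div_iff₀ h8pos]
    have hkey : Q ^ (-((2:ℝ)^(r+3))) * (n:ℝ)^3 * (8*(r:ℝ)^2)
        ≤ Q ^ (-((2:ℝ)^(r+3))) * (n:ℝ)^3 * Q ^ ((3:ℝ)*((1:ℝ)-(2:ℝ)^r) + (2:ℝ)^(r+3)) :=
      mul_le_mul_of_nonneg_left h8r (by positivity)
    have hcollapse : Q ^ (-((2:ℝ)^(r+3))) * (n:ℝ)^3
        * Q ^ ((3:ℝ)*((1:ℝ)-(2:ℝ)^r) + (2:ℝ)^(r+3)) = (μ r)^3 := by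
      rw [hμr3]
      rw [mul_comm (Q ^ (-((2:ℝ)^(r+3)))) ((n:ℝ)^3), mul_assoc, ← Real.rpow_add hQpos]
      congr 2
      ring
    calc Q ^ (-((2:ℝ)^(r+3))) * (n:ℝ)^3 * (8*(r:ℝ)^2) ≤ _ := hkey
      _ = (μ r)^3 := hcollapse
  exact le_trans htarget happly

set_option maxHeartbeats 1600000 in
/-- **Colored triangle removal (counting version).** Let `r, n` be positive integers and
let `G` be a tripartite graph with parts `V₀, V₁, V₂` (every edge joins two distinct
parts), where `|V₁| = |V₂| = n`, `|V₀| = cn` for a real `c > 0`, and every pair in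
`V₁ × V₂` is an edge. Let `χ` be an `r`-coloring of the edges of `G` and suppose there is
a collection of `n²` pairwise edge-disjoint monochromatic triangles covering all edges
between `V₁` and `V₂`. Then `G` contains at least `(4cr)^{−2^{r+3}}·n³` monochromatic
triangles. -/
theorem stmt19 {α : Type*} [Fintype α] [DecidableEq α] (r n : ℕ) (hr : 0 < r)
    (hn : 0 < n) (c : ℝ) (hc : 0 < c)
    (V0 V1 V2 : Finset α)
    (hd01 : Disjoint V0 V1) (hd02 : Disjoint V0 V2) (hd12 : Disjoint V1 V2)
    (huniv : V0 ∪ V1 ∪ V2 = Finset.univ)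
    (G : SimpleGraph α)
    (htri : ∀ u v, G.Adj u v →
      ¬(u ∈ V0 ∧ v ∈ V0) ∧ ¬(u ∈ V1 ∧ v ∈ V1) ∧ ¬(u ∈ V2 ∧ v ∈ V2))
    (h1 : V1.card = n) (h2 : V2.card = n) (h0 : (V0.card : ℝ) = c * n)
    (hcomplete : ∀ u ∈ V1, ∀ v ∈ V2, G.Adj u v)
    (χ : Sym2 α → Fin r)
    (𝒯 : Finset (Finset α)) (hTcard : 𝒯.card = n ^ 2)
    (hTmono : ∀ T ∈ 𝒯, G.IsNClique 3 T ∧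
      ∃ col : Fin r, ∀ u ∈ T, ∀ v ∈ T, u ≠ v → χ s(u, v) = col)
    (hTdisj : ∀ T₁ ∈ 𝒯, ∀ T₂ ∈ 𝒯, T₁ ≠ T₂ → (T₁ ∩ T₂).card ≤ 1)
    (hTcover : ∀ u ∈ V1, ∀ v ∈ V2, ∃ T ∈ 𝒯, u ∈ T ∧ v ∈ T) :
    (4 * c * (r : ℝ)) ^ (-((2 : ℝ) ^ (r + 3))) * (n : ℝ) ^ 3 ≤
      (({T : Finset α | G.IsNClique 3 T ∧
        ∃ col : Fin r, ∀ u ∈ T, ∀ v ∈ T, u ≠ v → χ s(u, v) = col}).ncard : ℝ) := by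
  classical
  -- construct the apex function
  have key : ∀ u ∈ V1, ∀ w ∈ V2, ∃ v, v ∈ V0 ∧ G.Adj u v ∧ G.Adj w v ∧
      χ s(u, v) = χ s(u, w) ∧ χ s(w, v) = χ s(u, w) ∧ ({u, w, v} : Finset α) ∈ 𝒯 := by
    intro u hu w hw
    obtain ⟨T, hT, huT, hwT⟩ := hTcover u hu w hw
    obtain ⟨⟨hclq, hcard⟩, col, hcol⟩ := hTmono T hT
    have huw : u ≠ w := by
      rintro rfl; exact Finset.disjoint_left.1 hd12 hu hw
    have hwT' : w ∈ T.erase u := Finset.mem_erase.2 ⟨huw.symm, hwT⟩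
    have hone : ((T.erase u).erase w).card = 1 := by
      rw [Finset.card_erase_of_mem hwT', Finset.card_erase_of_mem huT, hcard]
    obtain ⟨v, hveq⟩ := Finset.card_eq_one.1 hone
    have hvmem : v ∈ (T.erase u).erase w := by
      rw [hveq]; exact Finset.mem_singleton_self v
    obtain ⟨hvw, hvmem1⟩ := Finset.mem_erase.1 hvmem
    obtain ⟨hvu, hvT⟩ := Finset.mem_erase.1 hvmem1
    have huv : u ≠ v := Ne.symm hvu
    have hwv : w ≠ v := Ne.symm hvw
    have hadjuv : G.Adj u v :=
      hclq (Finset.mem_coe.2 huT) (Finset.mem_coe.2 hvT) huv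
    have hadjwv : G.Adj w v :=
      hclq (Finset.mem_coe.2 hwT) (Finset.mem_coe.2 hvT) hwv
    have hv0 : v ∈ V0 := by
      have hvuniv : v ∈ V0 ∪ V1 ∪ V2 := by rw [huniv]; exact Finset.mem_univ v
      rcases Finset.mem_union.1 hvuniv with h01 | hv2
      · rcases Finset.mem_union.1 h01 with hv0' | hv1
        · exact hv0'
        · exact absurd ⟨hv1, hu⟩ ((htri v u hadjuv.symm).2.1)
      · exact absurd ⟨hv2, hw⟩ ((htri v w hadjwv.symm).2.2)
    have hTeq : T = {u, w, v} := by
      have hsub : ({u, w, v} : Finset α) ⊆ T := by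
        intro a ha
        rcases Finset.mem_insert.1 ha with rfl | ha'
        · exact huT
        · rcases Finset.mem_insert.1 ha' with rfl | ha''
          · exact hwT
          · rw [Finset.mem_singleton.1 ha'']; exact hvT
      have hc3 : ({u, w, v} : Finset α).card = 3 := by
        rw [Finset.card_insert_of_notMem (by simp [huw, huv]),
          Finset.card_insert_of_notMem (by simp [hwv]), Finset.card_singleton]
      exact (Finset.eq_of_subset_of_card_le hsub (by rw [hcard, hc3])).symm
    refine ⟨v, hv0, hadjuv, hadjwv, ?_, ?_, hTeq ▸ hT⟩
    · rw [hcol u huT v hvT huv, hcol u huT w hwT huw]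
    · rw [hcol w hwT v hvT hwv, hcol u huT w hwT huw]
  have key' : ∀ u w, ∃ v, u ∈ V1 → w ∈ V2 → (v ∈ V0 ∧ G.Adj u v ∧ G.Adj w v ∧
      χ s(u, v) = χ s(u, w) ∧ χ s(w, v) = χ s(u, w) ∧ ({u, w, v} : Finset α) ∈ 𝒯) := by
    intro u w
    by_cases h : u ∈ V1 ∧ w ∈ V2
    · obtain ⟨v, hv⟩ := key u h.1 w h.2
      exact ⟨v, fun _ _ => hv⟩
    · exact ⟨u, fun h1' h2' => absurd ⟨h1', h2'⟩ h⟩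
  choose x hx using key'
  have hx0 : ∀ u ∈ V1, ∀ w ∈ V2, x u w ∈ V0 := fun u hu w hw => (hx u w hu hw).1
  have hxadj1 : ∀ u ∈ V1, ∀ w ∈ V2, G.Adj u (x u w) := fun u hu w hw => (hx u w hu hw).2.1
  have hxadj2 : ∀ u ∈ V1, ∀ w ∈ V2, G.Adj w (x u w) := fun u hu w hw => (hx u w hu hw).2.2.1
  have hxc1 : ∀ u ∈ V1, ∀ w ∈ V2, χ s(u, x u w) = χ s(u, w) :=
    fun u hu w hw => (hx u w hu hw).2.2.2.1
  have hxc2 : ∀ u ∈ V1, ∀ w ∈ V2, χ s(w, x u w) = χ s(u, w) :=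
    fun u hu w hw => (hx u w hu hw).2.2.2.2.1
  have hxT : ∀ u ∈ V1, ∀ w ∈ V2, ({u, w, x u w} : Finset α) ∈ 𝒯 :=
    fun u hu w hw => (hx u w hu hw).2.2.2.2.2
  -- injectivity of the apex map in each coordinate
  have hxinjR : ∀ u ∈ V1, ∀ w ∈ V2, ∀ w' ∈ V2, x u w = x u w' → w = w' := by
    intro u hu w hw w' hw' heq
    by_contra hne
    have hv0 : x u w ∈ V0 := hx0 u hu w hw
    have hT1 : ({u, w, x u w} : Finset α) ∈ 𝒯 := hxT u hu w hw
    have hT2 : ({u, w', x u w} : Finset α) ∈ 𝒯 := by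
      have := hxT u hu w' hw'
      rwa [← heq] at this
    have huv : u ≠ x u w := fun h => Finset.disjoint_left.1 hd01 hv0 (h ▸ hu)
    have hTT : ({u, w, x u w} : Finset α) ≠ {u, w', x u w} := by
      intro hTeq'
      have hmem : w' ∈ ({u, w, x u w} : Finset α) := by rw [hTeq']; simp
      rcases Finset.mem_insert.1 hmem with h' | h'
      · exact Finset.disjoint_left.1 hd12 hu (h' ▸ hw')
      · rcases Finset.mem_insert.1 h' with h'' | h''
        · exact hne h''.symm
        · exact Finset.disjoint_left.1 hd02 hv0 ((Finset.mem_singleton.1 h'') ▸ hw')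
    have hdisj := hTdisj _ hT1 _ hT2 hTT
    have hsub : ({u, x u w} : Finset α) ⊆ ({u, w, x u w} : Finset α) ∩ {u, w', x u w} := by
      intro a ha
      rcases Finset.mem_insert.1 ha with rfl | ha'
      · simp
      · rw [Finset.mem_singleton.1 ha']; simp
    have hc2 : ({u, x u w} : Finset α).card = 2 := by
      rw [Finset.card_insert_of_notMem (by simp [huv]), Finset.card_singleton]
    have := Finset.card_le_card hsub
    rw [hc2] at this
    omega
  have hxinjL : ∀ u ∈ V1, ∀ u' ∈ V1, ∀ w ∈ V2, x u w = x u' w → u = u' := by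
    intro u hu u' hu' w hw heq
    by_contra hne
    have hv0 : x u w ∈ V0 := hx0 u hu w hw
    have hT1 : ({u, w, x u w} : Finset α) ∈ 𝒯 := hxT u hu w hw
    have hT2 : ({u', w, x u w} : Finset α) ∈ 𝒯 := by
      have := hxT u' hu' w hw
      rwa [← heq] at this
    have hwv : w ≠ x u w := fun h => Finset.disjoint_left.1 hd02 hv0 (h ▸ hw)
    have hTT : ({u, w, x u w} : Finset α) ≠ {u', w, x u w} := by
      intro hTeq'
      have hmem : u' ∈ ({u, w, x u w} : Finset α) := by rw [hTeq']; simp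
      rcases Finset.mem_insert.1 hmem with h' | h'
      · exact hne h'.symm
      · rcases Finset.mem_insert.1 h' with h'' | h''
        · exact Finset.disjoint_left.1 hd12 hu' (h'' ▸ hw)
        · exact Finset.disjoint_left.1 hd01 hv0 ((Finset.mem_singleton.1 h'') ▸ hu')
    have hdisj := hTdisj _ hT1 _ hT2 hTT
    have hsub : ({w, x u w} : Finset α) ⊆ ({u, w, x u w} : Finset α) ∩ {u', w, x u w} := by
      intro a ha
      rcases Finset.mem_insert.1 ha with rfl | ha'
      · simp
      · rw [Finset.mem_singleton.1 ha']; simp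
    have hc2 : ({w, x u w} : Finset α).card = 2 := by
      rw [Finset.card_insert_of_notMem (by simp [hwv]), Finset.card_singleton]
    have := Finset.card_le_card hsub
    rw [hc2] at this
    omega
  -- c ≥ 1
  have hc1 : 1 ≤ c := by
    obtain ⟨u0, hu0⟩ := Finset.card_pos.1 (by rw [h1]; exact hn)
    have hinj : V2.card ≤ V0.card := by
      apply Finset.card_le_card_of_injOn (fun w => x u0 w)
      · intro w hw; exact hx0 u0 hu0 w hw
      · intro w hw w' hw' h
        exact hxinjR u0 hu0 w (Finset.mem_coe.1 hw) w' (Finset.mem_coe.1 hw') h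
    have hle : (n:ℝ) ≤ c * n := by
      rw [← h0]
      exact_mod_cast h2 ▸ hinj
    have hnpos : (0:ℝ) < n := by exact_mod_cast hn
    nlinarith
  -- the monochromatic triangle set as a Finset
  have hseteq : {T : Finset α | G.IsNClique 3 T ∧
      ∃ col : Fin r, ∀ u ∈ T, ∀ v ∈ T, u ≠ v → χ s(u, v) = col}
      = ↑(Finset.univ.filter (fun T : Finset α => G.IsNClique 3 T ∧
        ∃ col : Fin r, ∀ u ∈ T, ∀ v ∈ T, u ≠ v → χ s(u, v) = col)) := by
    ext T
    simp
  rw [hseteq, Set.ncard_coe_finset]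
  apply aux_count19 r n hr hn c hc1 V0 V1 V2 hd01 hd02 hd12 G χ h1 h2 h0 hcomplete
    x hx0 hxadj1 hxadj2 hxc1 hxc2 hxinjR hxinjL
  intro v hv u hu w hw hadjuv hadjwv hadjuw hcuv hcwv
  have hvu : v ≠ u := fun h => Finset.disjoint_left.1 hd01 hv (h ▸ hu)
  have hvw : v ≠ w := fun h => Finset.disjoint_left.1 hd02 hv (h ▸ hw)
  have huw : u ≠ w := fun h => Finset.disjoint_left.1 hd12 hu (h ▸ hw)
  refine Finset.mem_filter.2 ⟨Finset.mem_univ _, ⟨?_, ?_⟩, ?_⟩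
  · intro a ha b hb hab
    simp only [Finset.coe_insert, Set.mem_insert_iff, Finset.coe_singleton,
      Set.mem_singleton_iff] at ha hb
    rcases ha with rfl | rfl | rfl <;> rcases hb with rfl | rfl | rfl
    · exact absurd rfl hab
    · exact hadjuv.symm
    · exact hadjwv.symm
    · exact hadjuv
    · exact absurd rfl hab
    · exact hadjuw
    · exact hadjwv
    · exact hadjuw.symm
    · exact absurd rfl hab
  · rw [Finset.card_insert_of_notMem (by simp [hvu, hvw]),
      Finset.card_insert_of_notMem (by simp [huw]), Finset.card_singleton]
  · refine ⟨χ s(u, w), ?_⟩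
    intro a ha b hb hab
    simp only [Finset.mem_insert, Finset.mem_singleton] at ha hb
    rcases ha with rfl | rfl | rfl <;> rcases hb with rfl | rfl | rfl
    · exact absurd rfl hab
    · rw [Sym2.eq_swap]; exact hcuv
    · rw [Sym2.eq_swap]; exact hcwv
    · exact hcuv
    · exact absurd rfl hab
    · rfl
    · exact hcwv
    · rw [Sym2.eq_swap]
    · exact absurd rfl hab
end
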